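/- arXiv:1611.06598 — 4 statements merged into one kernel-verified Lean document; each statement's English description precedes it below -/
import Mathlib

section
/- Let d be a positive integer and let p(x) = Σ_{i=0}^d x^{d−i}(−1)^i a^p_i be a monic polynomial of degree d, with d-finite free cumulants κ^p_1, ..., κ^p_d. Then for every n with 1 ≤ n ≤ d, a^p_n = ((d)_n/(d^n n!)) · Σ_{π ∈ P(n)} d^{|π|} μ(0_n, π) κ^p_π. -/
open Finset Polynomial
open scoped Classical

/-- The set `P(n)` of set partitions of `[n] = {1, …, n}` (as partitions of `Fin n`),
partially ordered by reverse refinement, with minimum `⊥ = 0_n` (all singletons) and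
maximum `⊤ = 1_n` (one block). -/
abbrev SetPartition (n : ℕ) : Type := Finpartition (Finset.univ : Finset (Fin n))

/-- The Möbius function `μ(0_n, π) = (−1)^{n−|π|} ∏_{V ∈ π} (|V|−1)!` of the partition
lattice `P(n)`, evaluated at the bottom element and a partition `π`. -/
noncomputable def mu0 (n : ℕ) (π : SetPartition n) : ℝ :=
  (-1 : ℝ) ^ (n - π.parts.card) * ∏ V ∈ π.parts, (Nat.factorial (V.card - 1) : ℝ)

/-- The coefficients `a^p_i` of a degree-`d` polynomial written as
`p(x) = Σ_{i=0}^d x^{d-i} (−1)^i a^p_i`, with the convention `a^p_i = 0` for `i > d`. -/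
noncomputable def coeffA (d : ℕ) (p : Polynomial ℝ) (i : ℕ) : ℝ :=
  if i ≤ d then (-1 : ℝ) ^ i * p.coeff (d - i) else 0

/-- The `d`-finite free cumulants associated to a coefficient sequence `a`:
`κ_n = ((−d)^n/(d·(n−1)!)) · Σ_{π ∈ P(n)} (−1)^{|π|} N!_π a_π (|π|−1)! / (d)_π`. -/
noncomputable def finCumulant (d : ℕ) (a : ℕ → ℝ) (k : ℕ) : ℝ :=
  (-(d : ℝ)) ^ k / ((d : ℝ) * (Nat.factorial (k - 1) : ℝ)) *
    ∑ π : SetPartition k,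
      ((-1 : ℝ) ^ π.parts.card * (∏ V ∈ π.parts, (Nat.factorial V.card : ℝ)) *
          (∏ V ∈ π.parts, a V.card) * (Nat.factorial (π.parts.card - 1) : ℝ)) /
        (∏ V ∈ π.parts, (Nat.descFactorial d V.card : ℝ))

namespace CCF

variable {α : Type*} [DecidableEq α]

lemma avoid_parts_of_mem {t : Finset α} (τ : Finpartition t) {E : Finset α}
    (hE : E ∈ τ.parts) : (τ.avoid E).parts = τ.parts.erase E := by
  ext V
  rw [Finpartition.mem_avoid, Finset.mem_erase]
  constructor
  · rintro ⟨d, hd, hdE, rfl⟩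
    have hne : d ≠ E := by
      rintro rfl; exact hdE le_rfl
    have hdisj : Disjoint d E := τ.disjoint hd hE hne
    rw [Finset.sdiff_eq_self_of_disjoint hdisj]
    exact ⟨hne, hd⟩
  · rintro ⟨hne, hV⟩
    have hdisj : Disjoint V E := τ.disjoint hV hE hne
    refine ⟨V, hV, ?_, Finset.sdiff_eq_self_of_disjoint hdisj⟩
    intro hle
    exact (τ.nonempty_of_mem_parts hV).ne_empty (hdisj.eq_bot_of_le hle)


/-- Extend a finpartition of `t \ E` by the block `E`. -/
noncomputable def ext' {t E : Finset α} (hE : E.Nonempty) (hEt : E ⊆ t)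
    (σ : Finpartition (t \ E)) : Finpartition t :=
  σ.extend (by simpa [Finset.bot_eq_empty] using hE.ne_empty) Finset.sdiff_disjoint
    (by rw [Finset.sup_eq_union, Finset.sdiff_union_of_subset hEt])

@[simp] lemma ext'_parts {t E : Finset α} (hE : E.Nonempty) (hEt : E ⊆ t)
    (σ : Finpartition (t \ E)) : (ext' hE hEt σ).parts = insert E σ.parts := rfl

lemma not_mem_parts_sdiff {t E : Finset α} (hE : E.Nonempty) (σ : Finpartition (t \ E)) :
    E ∉ σ.parts := by
  intro hmem
  have h1 : E ⊆ t \ E := σ.le hmem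
  obtain ⟨x, hx⟩ := hE
  exact (Finset.mem_sdiff.1 (h1 hx)).2 hx

lemma avoid_ext' {t E : Finset α} (hE : E.Nonempty) (hEt : E ⊆ t)
    (σ : Finpartition (t \ E)) : (ext' hE hEt σ).avoid E = σ := by
  apply Finpartition.ext
  rw [avoid_parts_of_mem _ (Finset.mem_insert_self _ _), ext'_parts,
    Finset.erase_insert (not_mem_parts_sdiff hE σ)]

lemma ext'_avoid {t E : Finset α} (hE : E.Nonempty) (hEt : E ⊆ t) (τ : Finpartition t)
    (hmem : E ∈ τ.parts) : ext' hE hEt (τ.avoid E) = τ := by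
  apply Finpartition.ext
  rw [ext'_parts, avoid_parts_of_mem _ hmem, Finset.insert_erase hmem]

set_option maxHeartbeats 1000000 in
/-- Block-extraction bijection for sums over finpartitions. -/
lemma lemX (t : Finset α) (h : Finset α → Multiset ℕ → ℝ) :
    ∑ τ : Finpartition t, ∑ E ∈ τ.parts, h E (Multiset.map Finset.card (τ.parts.erase E).val)
      = ∑ E ∈ t.powerset.filter Finset.Nonempty,
          ∑ σ : Finpartition (t \ E), h E (Multiset.map Finset.card σ.parts.val) := by
  calc ∑ τ : Finpartition t, ∑ E ∈ τ.parts, h E (Multiset.map Finset.card (τ.parts.erase E).val)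
      = ∑ x ∈ (Finset.univ : Finset (Finpartition t)).sigma (fun τ => τ.parts),
          h x.2 (Multiset.map Finset.card (x.1.parts.erase x.2).val) :=
        (Finset.sum_sigma (Finset.univ : Finset (Finpartition t)) (fun τ => τ.parts)
          (fun x => h x.2 (Multiset.map Finset.card (x.1.parts.erase x.2).val))).symm
    _ = ∑ y ∈ (t.powerset.filter Finset.Nonempty).sigma
            (fun E => (Finset.univ : Finset (Finpartition (t \ E)))),
          h y.1 (Multiset.map Finset.card y.2.parts.val) := ?_
    _ = ∑ E ∈ t.powerset.filter Finset.Nonempty,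
          ∑ σ : Finpartition (t \ E), h E (Multiset.map Finset.card σ.parts.val) :=
        Finset.sum_sigma (t.powerset.filter Finset.Nonempty)
          (fun E => (Finset.univ : Finset (Finpartition (t \ E))))
          (fun y => h y.1 (Multiset.map Finset.card y.2.parts.val))
  refine Finset.sum_bij' (fun x _ => (⟨x.2, x.1.avoid x.2⟩ : Σ E : Finset α, Finpartition (t \ E)))
    (fun y hy => by
      refine ⟨ext' ?_ ?_ y.2, y.1⟩
      · exact (Finset.mem_filter.1 (Finset.mem_sigma.1 hy).1).2
      · exact Finset.mem_powerset.1 (Finset.mem_filter.1 (Finset.mem_sigma.1 hy).1).1)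
    ?_ ?_ ?_ ?_ ?_
  · rintro ⟨τ, E⟩ hx
    have hE : E ∈ τ.parts := (Finset.mem_sigma.1 hx).2
    rw [Finset.mem_sigma]
    exact ⟨Finset.mem_filter.2 ⟨Finset.mem_powerset.2 (τ.le hE), τ.nonempty_of_mem_parts hE⟩,
      Finset.mem_univ _⟩
  · rintro ⟨E, σ⟩ hy
    rw [Finset.mem_sigma]
    exact ⟨Finset.mem_univ _, Finset.mem_insert_self _ _⟩
  · rintro ⟨τ, E⟩ hx
    have hE : E ∈ τ.parts := (Finset.mem_sigma.1 hx).2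
    simp only []
    congr 1
    exact ext'_avoid _ _ τ hE
  · rintro ⟨E, σ⟩ hy
    simp only []
    congr 1
    exact avoid_ext' _ _ σ
  · rintro ⟨τ, E⟩ hx
    have hE : E ∈ τ.parts := (Finset.mem_sigma.1 hx).2
    simp only []
    rw [avoid_parts_of_mem τ hE]


section Transport

variable {γ : Type*} [DecidableEq γ]

/-- Push a finpartition forward along an embedding. -/
noncomputable def mapEmb (f : γ ↪ α) {s : Finset γ} (P : Finpartition s) :
    Finpartition (s.map f) where
  parts := P.parts.image (Finset.map f)
  supIndep := by
    rw [Finset.supIndep_iff_pairwiseDisjoint]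
    intro V hV W hW hVW
    simp only [Finset.coe_image, Set.mem_image, Finset.mem_coe] at hV hW
    obtain ⟨v, hv, rfl⟩ := hV
    obtain ⟨w, hw, rfl⟩ := hW
    have hvw : v ≠ w := fun hh => hVW (by rw [hh])
    exact (Finset.disjoint_map f).2 (P.disjoint hv hw hvw)
  sup_parts := by
    ext x
    simp only [Finset.mem_sup, Finset.mem_image, Finset.mem_map]
    constructor
    · rintro ⟨V, ⟨v, hv, rfl⟩, hx⟩
      simp only [id_eq, Finset.mem_map] at hx
      obtain ⟨y, hy, rfl⟩ := hx
      exact ⟨y, by rw [← P.sup_parts, Finset.mem_sup]; exact ⟨v, hv, hy⟩, rfl⟩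
    · rintro ⟨y, hy, rfl⟩
      rw [← P.sup_parts, Finset.mem_sup] at hy
      obtain ⟨v, hv, hyv⟩ := hy
      exact ⟨v.map f, ⟨v, hv, rfl⟩, Finset.mem_map_of_mem f hyv⟩
  bot_notMem := by
    simp only [Finset.bot_eq_empty, Finset.mem_image]
    rintro ⟨v, hv, hveq⟩
    rw [Finset.map_eq_empty] at hveq
    exact P.bot_notMem (by rw [Finset.bot_eq_empty, ← hveq]; exact hv)

lemma mapEmb_parts_val_card (f : γ ↪ α) {s : Finset γ} (P : Finpartition s) :
    Multiset.map Finset.card (mapEmb f P).parts.val = Multiset.map Finset.card P.parts.val := by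
  have hinj : Set.InjOn (Finset.map f) P.parts := fun a _ b _ hab =>
    Finset.map_injective f hab
  show Multiset.map Finset.card (P.parts.image (Finset.map f)).val = _
  rw [Finset.image_val_of_injOn hinj, Multiset.map_map]
  simp [Function.comp_def]

lemma mapEmb_injective (f : γ ↪ α) {s : Finset γ} :
    Function.Injective (mapEmb f (s := s)) := by
  intro P Q hPQ
  apply Finpartition.ext
  have := congrArg Finpartition.parts hPQ
  exact Finset.image_injective (Finset.map_injective f) this

lemma mapEmb_surjective (f : γ ↪ α) {s : Finset γ} :
    Function.Surjective (mapEmb f (s := s)) := by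
  intro Q
  have hrange : ∀ V ∈ Q.parts, ∀ x ∈ V, x ∈ Set.range f := by
    intro V hV x hx
    have := (Q.le hV) hx
    rw [Finset.mem_map] at this
    obtain ⟨y, _, rfl⟩ := this
    exact ⟨y, rfl⟩
  have hmapback : ∀ V ∈ Q.parts, (V.preimage f f.injective.injOn).map f = V := by
    intro V hV
    rw [Finset.map_eq_image, Finset.image_preimage]
    exact Finset.filter_true_of_mem (hrange V hV)
  refine ⟨⟨Q.parts.image (fun V => V.preimage f f.injective.injOn), ?_, ?_, ?_⟩, ?_⟩
  · rw [Finset.supIndep_iff_pairwiseDisjoint]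
    intro V' hV' W' hW' hne
    simp only [Finset.coe_image, Set.mem_image, Finset.mem_coe] at hV' hW'
    obtain ⟨V, hV, rfl⟩ := hV'
    obtain ⟨W, hW, rfl⟩ := hW'
    have hVW : V ≠ W := fun hh => hne (by rw [hh])
    refine Finset.disjoint_left.2 fun x hxV hxW => ?_
    simp only [id_eq, Finset.mem_preimage] at hxV hxW
    exact Finset.disjoint_left.1 (Q.disjoint hV hW hVW) hxV hxW
  · ext x
    rw [Finset.mem_sup]
    constructor
    · rintro ⟨V', hV', hx⟩
      rw [Finset.mem_image] at hV'
      obtain ⟨V, hV, rfl⟩ := hV'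
      simp only [id_eq, Finset.mem_preimage] at hx
      have : f x ∈ s.map f := Q.le hV hx
      rw [Finset.mem_map] at this
      obtain ⟨y, hy, hyx⟩ := this
      rwa [← f.injective hyx]
    · intro hx
      have : f x ∈ s.map f := Finset.mem_map_of_mem f hx
      rw [← Q.sup_parts, Finset.mem_sup] at this
      obtain ⟨V, hV, hxV⟩ := this
      exact ⟨V.preimage f f.injective.injOn, Finset.mem_image_of_mem _ hV,
        Finset.mem_preimage.2 hxV⟩
  · simp only [Finset.bot_eq_empty, Finset.mem_image]
    rintro ⟨V, hV, hVeq⟩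
    obtain ⟨x, hx⟩ := Q.nonempty_of_mem_parts hV
    obtain ⟨y, rfl⟩ := hrange V hV x hx
    have : y ∈ V.preimage f f.injective.injOn := Finset.mem_preimage.2 hx
    rw [hVeq] at this
    exact absurd this (Finset.notMem_empty y)
  · apply Finpartition.ext
    show (Q.parts.image _).image (Finset.map f) = Q.parts
    rw [Finset.image_image]
    have heq : Finset.image (Finset.map f ∘ fun V => V.preimage f f.injective.injOn) Q.parts
        = Finset.image id Q.parts :=
      Finset.image_congr (fun V hV => hmapback V hV)
    rw [heq, Finset.image_id]

lemma sum_mapEmb (f : γ ↪ α) (s : Finset γ) (h : Multiset ℕ → ℝ) :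
    ∑ P : Finpartition (s.map f), h (Multiset.map Finset.card P.parts.val)
      = ∑ P : Finpartition s, h (Multiset.map Finset.card P.parts.val) := by
  exact (Fintype.sum_equiv (Equiv.ofBijective _ ⟨mapEmb_injective f, mapEmb_surjective f⟩)
    (fun P : Finpartition s => h (Multiset.map Finset.card P.parts.val))
    (fun Q : Finpartition (s.map f) => h (Multiset.map Finset.card Q.parts.val))
    (fun P => (congrArg h (mapEmb_parts_val_card f P)).symm)).symm

lemma sum_ground_congr {s t : Finset α} (hst : s = t) (h : Multiset ℕ → ℝ) :
    ∑ P : Finpartition s, h (Multiset.map Finset.card P.parts.val)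
      = ∑ P : Finpartition t, h (Multiset.map Finset.card P.parts.val) := by
  subst hst; rfl

lemma sum_transport (t : Finset α) (h : Multiset ℕ → ℝ) :
    ∑ P : Finpartition t, h (Multiset.map Finset.card P.parts.val)
      = ∑ P : Finpartition (Finset.univ : Finset (Fin t.card)),
          h (Multiset.map Finset.card P.parts.val) := by
  have e : {x // x ∈ t} ≃ Fin t.card := Fintype.equivFinOfCardEq (Fintype.card_coe t)
  have h1 : (t.attach.map (Function.Embedding.subtype _)) = t := Finset.attach_map_val
  have h2 : t.attach = (Finset.univ : Finset {x // x ∈ t}) := Finset.attach_eq_univ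
  calc ∑ P : Finpartition t, h (Multiset.map Finset.card P.parts.val)
      = ∑ P : Finpartition ((Finset.univ : Finset {x // x ∈ t}).map
          (Function.Embedding.subtype _)), h (Multiset.map Finset.card P.parts.val) :=
        sum_ground_congr (by rw [← h2, h1]) h
    _ = ∑ P : Finpartition (Finset.univ : Finset {x // x ∈ t}),
          h (Multiset.map Finset.card P.parts.val) := sum_mapEmb _ _ h
    _ = ∑ P : Finpartition ((Finset.univ : Finset {x // x ∈ t}).map e.toEmbedding),
          h (Multiset.map Finset.card P.parts.val) := (sum_mapEmb _ _ h).symm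
    _ = ∑ P : Finpartition (Finset.univ : Finset (Fin t.card)),
          h (Multiset.map Finset.card P.parts.val) :=
        sum_ground_congr (Finset.map_univ_equiv e) h

end Transport


lemma cards_cons {t : Finset α} (τ : Finpartition t) {E : Finset α} (hE : E ∈ τ.parts) :
    Multiset.map Finset.card τ.parts.val
      = E.card ::ₘ Multiset.map Finset.card (τ.parts.erase E).val := by
  rw [Finset.erase_val, ← Multiset.map_cons,
    Multiset.cons_erase (Finset.mem_def.1 hE)]

lemma sum_parts_eq {t : Finset α} (τ : Finpartition t) {a : α} (ha : a ∈ t)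
    (g : Finset α → ℝ) :
    ∑ E ∈ τ.parts, (if a ∈ E then g E else 0) = g (τ.part a) := by
  rw [Finset.sum_eq_single_of_mem (τ.part a) (τ.part_mem.2 ha)]
  · rw [if_pos (τ.mem_part ha)]
  · intro E hE hne
    rw [if_neg]
    intro haE
    exact hne (τ.eq_of_mem_parts hE (τ.part_mem.2 ha) haE (τ.mem_part ha))

section Defs

/-- Multiplicative extension of a sequence. -/
noncomputable def prodM (A : ℕ → ℝ) (M : Multiset ℕ) : ℝ := (M.map A).prod

noncomputable def cT (A : ℕ → ℝ) (M : Multiset ℕ) : ℝ :=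
  (-1 : ℝ) ^ (Multiset.card M - 1) * ((Multiset.card M - 1).factorial : ℝ) * prodM A M

noncomputable def cU (A : ℕ → ℝ) (M : Multiset ℕ) : ℝ :=
  (-1 : ℝ) ^ (Multiset.card M) * ((Multiset.card M).factorial : ℝ) * prodM A M

noncomputable def TT (A : ℕ → ℝ) (m : ℕ) : ℝ :=
  ∑ σ : Finpartition (Finset.univ : Finset (Fin m)),
    cT A (Multiset.map Finset.card σ.parts.val)

noncomputable def UU (A : ℕ → ℝ) (m : ℕ) : ℝ :=
  ∑ σ : Finpartition (Finset.univ : Finset (Fin m)),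
    cU A (Multiset.map Finset.card σ.parts.val)

noncomputable def Abar (A : ℕ → ℝ) (k : ℕ) : ℝ := if k = 0 then 1 else A k

end Defs

lemma prodM_cons (A : ℕ → ℝ) (k : ℕ) (M : Multiset ℕ) :
    prodM A (k ::ₘ M) = A k * prodM A M := by
  simp [prodM]

/-- Splitting the `T` sum according to the block containing `a`. -/
lemma T_split (A : ℕ → ℝ) (t : Finset α) {a : α} (ha : a ∈ t) :
    ∑ σ : Finpartition t, cT A (Multiset.map Finset.card σ.parts.val)
      = ∑ C ∈ t.powerset.filter (fun C => a ∈ C), A C.card * UU A ((t \ C).card) := by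
  calc ∑ σ : Finpartition t, cT A (Multiset.map Finset.card σ.parts.val)
      = ∑ τ : Finpartition t, ∑ E ∈ τ.parts,
          (if a ∈ E then A E.card
            * cU A (Multiset.map Finset.card (τ.parts.erase E).val) else 0) := by
        refine Finset.sum_congr rfl fun τ _ => ?_
        rw [sum_parts_eq τ ha]
        have hB : τ.part a ∈ τ.parts := τ.part_mem.2 ha
        rw [cards_cons τ hB, cT, prodM_cons]
        rw [Multiset.card_cons]
        simp only [Nat.add_sub_cancel, cU]
        have hcard : Multiset.card (Multiset.map Finset.card (τ.parts.erase (τ.part a)).val)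
            = τ.parts.card - 1 := by
          rw [Multiset.card_map, ← Finset.card_def, Finset.card_erase_of_mem hB]
        ring
    _ = ∑ E ∈ t.powerset.filter Finset.Nonempty, ∑ σ : Finpartition (t \ E),
          (if a ∈ E then A E.card * cU A (Multiset.map Finset.card σ.parts.val) else 0) :=
        lemX t (fun E M => if a ∈ E then A E.card * cU A M else 0)
    _ = ∑ C ∈ t.powerset.filter (fun C => a ∈ C), A C.card * UU A ((t \ C).card) := by
        rw [Finset.sum_filter, Finset.sum_filter]
        refine Finset.sum_congr rfl fun E hE => ?_
        by_cases haE : a ∈ E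
        · rw [if_pos haE]
          have hne : E.Nonempty := ⟨a, haE⟩
          rw [if_pos hne]
          simp only [if_pos haE]
          rw [← Finset.mul_sum]
          congr 1
          rw [sum_transport (t \ E) (cU A)]
          rfl
        · rw [if_neg haE]
          by_cases hne : E.Nonempty
          · rw [if_pos hne]
            simp [haE]
          · rw [if_neg hne]


lemma inner_U (A : ℕ → ℝ) {t : Finset α} (ht : t.Nonempty) (τ : Finpartition t) :
    ∑ E ∈ τ.parts, A E.card * cU A (Multiset.map Finset.card (τ.parts.erase E).val)
      = - cU A (Multiset.map Finset.card τ.parts.val) := by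
  have hpne : τ.parts.Nonempty := Finpartition.parts_nonempty τ (by
    simpa [Finset.bot_eq_empty] using ht.ne_empty)
  obtain ⟨q, hq⟩ := Nat.exists_eq_add_of_lt (Finset.card_pos.2 hpne)
  rw [Finset.sum_congr rfl (fun E hE => ?_ :
    ∀ E ∈ τ.parts, A E.card * cU A (Multiset.map Finset.card (τ.parts.erase E).val)
      = (-1 : ℝ) ^ q * (q.factorial : ℝ)
          * prodM A (Multiset.map Finset.card τ.parts.val))]
  · rw [Finset.sum_const, hq]
    rw [cU, Multiset.card_map, ← Finset.card_def, hq]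
    push_cast [Nat.factorial_succ]
    rw [pow_succ]
    ring
  · have hcardE : Multiset.card (Multiset.map Finset.card (τ.parts.erase E).val) = q := by
      rw [Multiset.card_map, ← Finset.card_def, Finset.card_erase_of_mem hE, hq]
      simp
    rw [cU, hcardE, cards_cons τ hE, prodM_cons]
    ring

lemma sum_powerset_sdiff (t : Finset α) (f g : Finset α → ℝ)
    (hfg : ∀ D, D ⊆ t → D ≠ t → f D = g (t \ D)) :
    ∑ D ∈ t.powerset.erase t, f D
      = ∑ E ∈ t.powerset.filter Finset.Nonempty, g E := by
  refine Finset.sum_nbij' (fun D => t \ D) (fun E => t \ E) ?_ ?_ ?_ ?_ ?_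
  · intro D hD
    rw [Finset.mem_erase, Finset.mem_powerset] at hD
    rw [Finset.mem_filter, Finset.mem_powerset]
    exact ⟨Finset.sdiff_subset, Finset.sdiff_nonempty.2 fun hsub =>
      hD.1 (Finset.Subset.antisymm hD.2 hsub)⟩
  · intro E hE
    rw [Finset.mem_filter, Finset.mem_powerset] at hE
    rw [Finset.mem_erase, Finset.mem_powerset]
    refine ⟨fun heq => ?_, Finset.sdiff_subset⟩
    have heq' : t \ E = t := heq
    obtain ⟨x, hx⟩ := hE.2
    have hx' : x ∈ t \ E := by rw [heq']; exact hE.1 hx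
    exact (Finset.mem_sdiff.1 hx').2 hx
  · intro D hD
    rw [Finset.mem_erase, Finset.mem_powerset] at hD
    exact Finset.sdiff_sdiff_eq_self hD.2
  · intro E hE
    rw [Finset.mem_filter, Finset.mem_powerset] at hE
    exact Finset.sdiff_sdiff_eq_self hE.1
  · intro D hD
    rw [Finset.mem_erase, Finset.mem_powerset] at hD
    exact hfg D hD.2 hD.1

lemma W_zero (A : ℕ → ℝ) (t : Finset α) (ht : t.Nonempty) :
    ∑ D ∈ t.powerset, UU A D.card * Abar A ((t \ D).card) = 0 := by
  have hsplit := (Finset.add_sum_erase t.powerset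
    (fun D => UU A D.card * Abar A ((t \ D).card)) (Finset.mem_powerset_self t)).symm
  rw [hsplit, Finset.sdiff_self]
  have h1 : Abar A ((∅ : Finset α).card) = 1 := by simp [Abar]
  rw [h1, mul_one]
  have h2 : ∑ D ∈ t.powerset.erase t, UU A D.card * Abar A ((t \ D).card)
      = ∑ E ∈ t.powerset.filter Finset.Nonempty,
          A E.card * UU A ((t \ E).card) := by
    refine sum_powerset_sdiff t _ (fun E => A E.card * UU A ((t \ E).card))
      (fun D hDt hDne => ?_)
    have hne : (t \ D).Nonempty := Finset.sdiff_nonempty.2 fun hsub =>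
      hDne (Finset.Subset.antisymm hDt hsub)
    have hA : Abar A ((t \ D).card) = A ((t \ D).card) := by
      rw [Abar, if_neg (by simpa using hne.card_pos.ne')]
    show UU A D.card * Abar A ((t \ D).card)
      = A ((t \ D).card) * UU A ((t \ (t \ D)).card)
    rw [hA, Finset.sdiff_sdiff_eq_self hDt, mul_comm]
  rw [h2]
  have h3 : ∑ E ∈ t.powerset.filter Finset.Nonempty, A E.card * UU A ((t \ E).card)
      = ∑ E ∈ t.powerset.filter Finset.Nonempty, ∑ σ : Finpartition (t \ E),
          A E.card * cU A (Multiset.map Finset.card σ.parts.val) := by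
    refine Finset.sum_congr rfl fun E hE => ?_
    rw [← Finset.mul_sum]
    congr 1
    rw [sum_transport (t \ E) (cU A)]
    rfl
  rw [h3, ← lemX t (fun E M => A E.card * cU A M)]
  have h4 : ∑ τ : Finpartition t, ∑ E ∈ τ.parts,
      A E.card * cU A (Multiset.map Finset.card (τ.parts.erase E).val)
      = ∑ τ : Finpartition t, - cU A (Multiset.map Finset.card τ.parts.val) :=
    Finset.sum_congr rfl fun τ _ => inner_U A ht τ
  rw [h4, Finset.sum_neg_distrib]
  have h5 : ∑ τ : Finpartition t, cU A (Multiset.map Finset.card τ.parts.val)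
      = UU A t.card := by rw [sum_transport t (cU A)]; rfl
  rw [h5]
  ring_nf


lemma sum_partition_empty (h : Multiset ℕ → ℝ) :
    ∑ π : Finpartition (∅ : Finset α), h (Multiset.map Finset.card π.parts.val) = h 0 := by
  have hparts : ∀ π : Finpartition (∅ : Finset α), π.parts = ∅ := fun π =>
    Finpartition.parts_eq_empty_iff.mpr Finset.bot_eq_empty.symm
  rw [Finset.sum_congr rfl (fun π _ => by rw [hparts π]; rfl :
    ∀ π ∈ (Finset.univ : Finset (Finpartition (∅ : Finset α))),
      h (Multiset.map Finset.card π.parts.val) = h 0)]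
  rw [Finset.sum_const, Finset.card_univ]
  have hcard : Fintype.card (Finpartition (∅ : Finset α)) = 1 := by
    have : Unique (Finpartition (∅ : Finset α)) := by
      rw [← Finset.bot_eq_empty]; infer_instance
    exact Fintype.card_unique
  rw [hcard, one_smul]

lemma UU_zero (A : ℕ → ℝ) : UU A 0 = 1 := by
  rw [UU, sum_ground_congr (Finset.univ_eq_empty (α := Fin 0)) (cU A),
    sum_partition_empty (cU A)]
  simp [cU, prodM]

/-- The moment–cumulant inversion: summing the multiplicative extension of `TT`
over all partitions recovers the original sequence. -/
lemma main_ind (A : ℕ → ℝ) (t : Finset α) :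
    ∑ π : Finpartition t, (Multiset.map (TT A) (Multiset.map Finset.card π.parts.val)).prod
      = Abar A t.card := by
  induction t using Finset.strongInduction with
  | _ t IH => ?_
  rcases Finset.eq_empty_or_nonempty t with rfl | ht
  · rw [sum_partition_empty (fun M => (Multiset.map (TT A) M).prod)]
    simp [Abar]
  obtain ⟨a, ha⟩ := ht
  -- Step 1: extract the block containing `a`
  have step1 : ∑ π : Finpartition t,
      (Multiset.map (TT A) (Multiset.map Finset.card π.parts.val)).prod
      = ∑ τ : Finpartition t, ∑ E ∈ τ.parts,
          (if a ∈ E then TT A E.card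
            * (Multiset.map (TT A)
                (Multiset.map Finset.card (τ.parts.erase E).val)).prod else 0) := by
    refine Finset.sum_congr rfl fun τ _ => ?_
    rw [sum_parts_eq τ ha]
    rw [cards_cons τ (τ.part_mem.2 ha), Multiset.map_cons, Multiset.prod_cons]
  rw [step1, lemX t (fun E M => if a ∈ E then TT A E.card * (Multiset.map (TT A) M).prod else 0)]
  -- Step 2: rewrite as a sum over blocks containing `a`, using the IH
  have step2 : ∑ E ∈ t.powerset.filter Finset.Nonempty, ∑ σ : Finpartition (t \ E),
      (if a ∈ E then TT A E.card
        * (Multiset.map (TT A) (Multiset.map Finset.card σ.parts.val)).prod else 0)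
      = ∑ E ∈ t.powerset.filter (fun E => a ∈ E), TT A E.card * Abar A ((t \ E).card) := by
    rw [Finset.sum_filter, Finset.sum_filter]
    refine Finset.sum_congr rfl fun E hE => ?_
    rw [Finset.mem_powerset] at hE
    by_cases hne : E.Nonempty
    · rw [if_pos hne]
      by_cases haE : a ∈ E
      · rw [if_pos haE]
        simp only [if_pos haE]
        rw [← Finset.mul_sum]
        congr 1
        exact IH (t \ E) (Finset.sdiff_ssubset hE hne)
      · rw [if_neg haE]
        simp [haE]
    · rw [if_neg hne]
      rw [if_neg (fun haE => hne ⟨a, haE⟩)]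
  rw [step2]
  -- Step 3: expand `TT A E.card` via `T_split`
  have step3 : ∑ E ∈ t.powerset.filter (fun E => a ∈ E), TT A E.card * Abar A ((t \ E).card)
      = ∑ E ∈ t.powerset.filter (fun E => a ∈ E),
          ∑ C ∈ E.powerset.filter (fun C => a ∈ C),
            A C.card * UU A ((E \ C).card) * Abar A ((t \ E).card) := by
    refine Finset.sum_congr rfl fun E hE => ?_
    rw [Finset.mem_filter, Finset.mem_powerset] at hE
    have hTT : TT A E.card = ∑ C ∈ E.powerset.filter (fun C => a ∈ C),
        A C.card * UU A ((E \ C).card) := by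
      rw [TT, ← sum_transport E (cT A), T_split A E hE.2]
    rw [hTT, Finset.sum_mul]
  rw [step3]
  -- Step 4: reindex pairs (E, C) ↦ (C, D := E \ C)
  have step4 : ∑ E ∈ t.powerset.filter (fun E => a ∈ E),
      ∑ C ∈ E.powerset.filter (fun C => a ∈ C),
        A C.card * UU A ((E \ C).card) * Abar A ((t \ E).card)
      = ∑ C ∈ t.powerset.filter (fun C => a ∈ C),
          ∑ D ∈ (t \ C).powerset,
            A C.card * (UU A D.card * Abar A (((t \ C) \ D).card)) := by
    rw [Finset.sum_sigma' (t.powerset.filter (fun E => a ∈ E))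
      (fun E => E.powerset.filter (fun C => a ∈ C))
      (fun E C => A C.card * UU A ((E \ C).card) * Abar A ((t \ E).card)),
      Finset.sum_sigma' (t.powerset.filter (fun C => a ∈ C))
      (fun C => (t \ C).powerset)
      (fun C D => A C.card * (UU A D.card * Abar A (((t \ C) \ D).card)))]
    refine Finset.sum_bij' (fun x _ => (⟨x.2, x.1 \ x.2⟩ : Σ _ : Finset α, Finset α))
      (fun y _ => (⟨y.1 ∪ y.2, y.1⟩ : Σ _ : Finset α, Finset α)) ?_ ?_ ?_ ?_ ?_
    · rintro ⟨E, C⟩ hx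
      simp only [Finset.mem_sigma, Finset.mem_filter, Finset.mem_powerset] at hx ⊢
      exact ⟨⟨hx.2.1.trans hx.1.1, hx.2.2⟩, Finset.sdiff_subset_sdiff hx.1.1 le_rfl⟩
    · rintro ⟨C, D⟩ hy
      simp only [Finset.mem_sigma, Finset.mem_filter, Finset.mem_powerset] at hy ⊢
      exact ⟨⟨Finset.union_subset hy.1.1 (hy.2.trans Finset.sdiff_subset),
        Finset.mem_union_left _ hy.1.2⟩, Finset.subset_union_left, hy.1.2⟩
    · rintro ⟨E, C⟩ hx
      simp only [Finset.mem_sigma, Finset.mem_filter, Finset.mem_powerset] at hx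
      dsimp only
      have hEC : C ∪ E \ C = E := Finset.union_sdiff_of_subset hx.2.1
      simp only [Sigma.mk.inj_iff]
      exact ⟨hEC, HEq.rfl⟩
    · rintro ⟨C, D⟩ hy
      simp only [Finset.mem_sigma, Finset.mem_filter, Finset.mem_powerset] at hy
      dsimp only
      have hdisj : Disjoint C D := (Finset.sdiff_disjoint.mono_left hy.2).symm
      simp only [Sigma.mk.inj_iff]
      exact ⟨trivial, heq_of_eq (Finset.union_sdiff_cancel_left hdisj)⟩
    · rintro ⟨E, C⟩ hx
      simp only [Finset.mem_sigma, Finset.mem_filter, Finset.mem_powerset] at hx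
      dsimp only
      have hsd : (t \ C) \ (E \ C) = t \ E := by
        ext x
        simp only [Finset.mem_sdiff]
        constructor
        · rintro ⟨⟨hxt, hxC⟩, hxEC⟩
          exact ⟨hxt, fun hxE => hxEC ⟨hxE, hxC⟩⟩
        · rintro ⟨hxt, hxE⟩
          exact ⟨⟨hxt, fun hxC => hxE (hx.2.1 hxC)⟩, fun h => hxE h.1⟩
      rw [hsd, mul_assoc]
  rw [step4]
  -- Step 5: the inner sum is `W`, which vanishes unless `C = t`
  have step5 : ∀ C ∈ t.powerset.filter (fun C => a ∈ C), C ≠ t →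
      A C.card * ∑ D ∈ (t \ C).powerset,
        UU A D.card * Abar A (((t \ C) \ D).card) = 0 := by
    intro C hC hCne
    rw [Finset.mem_filter, Finset.mem_powerset] at hC
    rw [W_zero A (t \ C) (Finset.sdiff_nonempty.2 fun hsub =>
      hCne (Finset.Subset.antisymm hC.1 hsub)), mul_zero]
  have step6 : ∑ C ∈ t.powerset.filter (fun C => a ∈ C),
      ∑ D ∈ (t \ C).powerset,
        A C.card * (UU A D.card * Abar A (((t \ C) \ D).card))
      = A t.card := by
    rw [Finset.sum_eq_single_of_mem t
      (Finset.mem_filter.2 ⟨Finset.mem_powerset_self t, ha⟩)]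
    · rw [Finset.sdiff_self]
      rw [Finset.powerset_empty, Finset.sum_singleton]
      rw [Finset.card_empty, UU_zero, Finset.sdiff_empty, Finset.card_empty]
      rw [show Abar A 0 = 1 from rfl]
      ring
    · intro C hC hCne
      rw [← Finset.mul_sum]
      exact step5 C hC hCne
  rw [step6, Abar, if_neg (Finset.card_pos.2 ⟨a, ha⟩).ne']

end CCF

namespace CCF

lemma prodM_eq_prod (A : ℕ → ℝ) {α : Type*} [DecidableEq α] {t : Finset α}
    (P : Finpartition t) :
    prodM A (Multiset.map Finset.card P.parts.val) = ∏ V ∈ P.parts, A V.card := by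
  rw [prodM, Multiset.map_map]
  rfl

lemma card_cards {α : Type*} [DecidableEq α] {t : Finset α} (P : Finpartition t) :
    Multiset.card (Multiset.map Finset.card P.parts.val) = P.parts.card := by
  rw [Multiset.card_map]
  rfl

lemma finCumulant_eq (d : ℕ) (hd : 0 < d) (a : ℕ → ℝ) (k : ℕ) (hk : 1 ≤ k) :
    finCumulant d a k
      = -((-(d : ℝ)) ^ k / ((d : ℝ) * (Nat.factorial (k - 1) : ℝ)))
        * TT (fun j => (j.factorial : ℝ) * a j / (Nat.descFactorial d j : ℝ)) k := by
  set A : ℕ → ℝ := fun j => (j.factorial : ℝ) * a j / (Nat.descFactorial d j : ℝ) with hA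
  rw [finCumulant, TT]
  have hterm : ∀ π : SetPartition k,
      ((-1 : ℝ) ^ π.parts.card * (∏ V ∈ π.parts, (Nat.factorial V.card : ℝ)) *
          (∏ V ∈ π.parts, a V.card) * (Nat.factorial (π.parts.card - 1) : ℝ)) /
        (∏ V ∈ π.parts, (Nat.descFactorial d V.card : ℝ))
      = - cT A (Multiset.map Finset.card π.parts.val) := by
    intro π
    have hne : (Finset.univ : Finset (Fin k)).Nonempty := ⟨⟨0, hk⟩, Finset.mem_univ _⟩
    have hpne : π.parts.Nonempty := Finpartition.parts_nonempty π (by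
      simpa [Finset.bot_eq_empty] using hne.ne_empty)
    obtain ⟨q, hq⟩ := Nat.exists_eq_add_of_lt (Finset.card_pos.2 hpne)
    have hprodA : ∏ V ∈ π.parts, A V.card
        = ((∏ V ∈ π.parts, (Nat.factorial V.card : ℝ)) * ∏ V ∈ π.parts, a V.card) /
            (∏ V ∈ π.parts, (Nat.descFactorial d V.card : ℝ)) := by
      rw [← Finset.prod_mul_distrib, ← Finset.prod_div_distrib]
    rw [cT, card_cards, prodM_eq_prod, hprodA, hq]
    simp only [Nat.add_sub_cancel]
    rw [pow_succ]
    ring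
  rw [Finset.sum_congr rfl fun π _ => hterm π, Finset.sum_neg_distrib]
  ring

end CCF

open CCF in
/-- **Coefficient–cumulant formula** (Proposition 3.4, first half):
for a monic polynomial `p` of degree `d ≥ 1` with coefficients `a^p_i` and `d`-finite
free cumulants `κ^p_n`, for every `1 ≤ n ≤ d`,
`a^p_n = ((d)_n/(d^n n!)) Σ_{π ∈ P(n)} d^{|π|} μ(0_n, π) κ^p_π`. -/
theorem coefficient_cumulant_formula (d : ℕ) (hd : 0 < d) (p : Polynomial ℝ)
    (hmonic : p.Monic) (hdeg : p.natDegree = d) (n : ℕ) (hn1 : 1 ≤ n) (hnd : n ≤ d) :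
    coeffA d p n =
      (Nat.descFactorial d n : ℝ) / ((d : ℝ) ^ n * (Nat.factorial n : ℝ)) *
        ∑ π : SetPartition n,
          (d : ℝ) ^ π.parts.card * mu0 n π *
            ∏ V ∈ π.parts, finCumulant d (coeffA d p) V.card := by
  classical
  set a : ℕ → ℝ := coeffA d p with ha
  set A : ℕ → ℝ := fun j => (j.factorial : ℝ) * a j / (Nat.descFactorial d j : ℝ) with hA
  have hd0 : (d : ℝ) ≠ 0 := Nat.cast_ne_zero.2 hd.ne'
  have hterm : ∀ π : SetPartition n,
      (d : ℝ) ^ π.parts.card * mu0 n π * ∏ V ∈ π.parts, finCumulant d a V.card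
      = (d : ℝ) ^ n
          * (Multiset.map (TT A) (Multiset.map Finset.card π.parts.val)).prod := by
    intro π
    have hVpos : ∀ V ∈ π.parts, 1 ≤ V.card := fun V hV =>
      Finset.card_pos.2 (π.nonempty_of_mem_parts hV)
    have hsum : ∑ V ∈ π.parts, V.card = n := by
      rw [Finpartition.sum_card_parts, Finset.card_univ, Fintype.card_fin]
    have hple : π.parts.card ≤ n := by
      calc π.parts.card = ∑ _V ∈ π.parts, 1 := by rw [Finset.sum_const, smul_eq_mul, mul_one]
        _ ≤ ∑ V ∈ π.parts, V.card := Finset.sum_le_sum hVpos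
        _ = n := hsum
    have hprodTT : (Multiset.map (TT A) (Multiset.map Finset.card π.parts.val)).prod
        = ∏ V ∈ π.parts, TT A V.card := by
      rw [Multiset.map_map]
      rfl
    have hcum : ∏ V ∈ π.parts, finCumulant d a V.card
        = (∏ V ∈ π.parts,
            -((-(d : ℝ)) ^ V.card / ((d : ℝ) * (Nat.factorial (V.card - 1) : ℝ))))
          * ∏ V ∈ π.parts, TT A V.card := by
      rw [← Finset.prod_mul_distrib]
      exact Finset.prod_congr rfl fun V hV => finCumulant_eq d hd a V.card (hVpos V hV)
    set F : ℝ := ∏ V ∈ π.parts, (Nat.factorial (V.card - 1) : ℝ) with hF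
    have hFne : F ≠ 0 := Finset.prod_ne_zero_iff.2 fun V _ =>
      Nat.cast_ne_zero.2 (Nat.factorial_ne_zero _)
    have hc : (∏ V ∈ π.parts,
        -((-(d : ℝ)) ^ V.card / ((d : ℝ) * (Nat.factorial (V.card - 1) : ℝ))))
        = (-1 : ℝ) ^ π.parts.card * ((-(d : ℝ)) ^ n / ((d : ℝ) ^ π.parts.card * F)) := by
      have h1 : ∀ V ∈ π.parts,
          -((-(d : ℝ)) ^ V.card / ((d : ℝ) * (Nat.factorial (V.card - 1) : ℝ)))
          = (-1 : ℝ) * ((-(d : ℝ)) ^ V.card / ((d : ℝ) * (Nat.factorial (V.card - 1) : ℝ))) :=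
        fun V _ => by ring
      rw [Finset.prod_congr rfl h1, Finset.prod_mul_distrib, Finset.prod_const,
        Finset.prod_div_distrib, Finset.prod_pow_eq_pow_sum, hsum,
        Finset.prod_mul_distrib, Finset.prod_const]
    rw [hcum, hc, hprodTT, mu0, hF]
    have hneg : (-(d : ℝ)) ^ n = (-1 : ℝ) ^ n * (d : ℝ) ^ n := by
      rw [neg_pow]
    have hsign : ((-1 : ℝ)) ^ (n - π.parts.card) * (-1 : ℝ) ^ π.parts.card = (-1 : ℝ) ^ n := by
      rw [← pow_add, Nat.sub_add_cancel hple]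
    have hGne : (d : ℝ) ^ π.parts.card * F ≠ 0 := mul_ne_zero (pow_ne_zero _ hd0) hFne
    field_simp
    rw [hneg]
    have h2 : ((-1:ℝ)) ^ n * (-1:ℝ) ^ n = 1 := by rw [← pow_add, Even.neg_one_pow ⟨n, rfl⟩]
    linear_combination ((-1:ℝ) ^ n * (d:ℝ) ^ n * ∏ V ∈ π.parts, TT A V.card) * hsign
      + ((d:ℝ) ^ n * ∏ V ∈ π.parts, TT A V.card) * h2
  rw [Finset.sum_congr rfl fun π _ => hterm π, ← Finset.mul_sum]
  have hmain : ∑ π : SetPartition n,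
      (Multiset.map (TT A) (Multiset.map Finset.card π.parts.val)).prod = A n := by
    have h := main_ind A (Finset.univ : Finset (Fin n))
    rw [Finset.card_univ, Fintype.card_fin] at h
    rw [h, Abar, if_neg (Nat.one_le_iff_ne_zero.mp hn1)]
  rw [hmain, hA]
  have hdesc : (Nat.descFactorial d n : ℝ) ≠ 0 :=
    Nat.cast_ne_zero.2 fun h0 => (Nat.descFactorial_eq_zero_iff_lt.1 h0).not_ge hnd
  have hfact : ((n.factorial : ℝ)) ≠ 0 := Nat.cast_ne_zero.2 (Nat.factorial_ne_zero n)
  have hdn : (d : ℝ) ^ n ≠ 0 := pow_ne_zero _ hd0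
  field_simp
end

section
/- Let p be a monic real-rooted polynomial of degree d that is infinitely divisible with respect to finite free convolution, with d-finite free cumulants (κ_n)_{n=1}^d. Then both the sequence (κ~_n)_{n=1}^d with κ~_n = ((d)_n/d^n) κ_n and the sequence (κ_n)_{n=1}^d are conditionally positive definite: for every r ≥ 1 with 2r ≤ d and all complex numbers α_1, ..., α_r, one has Σ_{i,j=1}^r α_i conj(α_j) κ~_{i+j} ≥ 0 and Σ_{i,j=1}^r α_i conj(α_j) κ_{i+j} ≥ 0. -/
open Finset Polynomial
open scoped Classical

/-- The coefficient sequence recovered from a cumulant sequence `κ` via the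
coefficient–cumulant formula `a_n = ((d)_n/(d^n n!)) Σ_{π ∈ P(n)} d^{|π|} μ(0_n,π) κ_π`. -/
noncomputable def coeffOfCumulants (d : ℕ) (κ : ℕ → ℝ) (n : ℕ) : ℝ :=
  (Nat.descFactorial d n : ℝ) / ((d : ℝ) ^ n * (Nat.factorial n : ℝ)) *
    ∑ π : SetPartition n, (d : ℝ) ^ π.parts.card * mu0 n π * ∏ V ∈ π.parts, κ V.card

/-- The monic degree-`d` polynomial whose `d`-finite free cumulants are the given
sequence `κ`. -/
noncomputable def polyOfCumulants (d : ℕ) (κ : ℕ → ℝ) : Polynomial ℝ :=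
  ∑ i ∈ Finset.range (d + 1),
    Polynomial.C ((-1 : ℝ) ^ i * coeffOfCumulants d κ i) * Polynomial.X ^ (d - i)

/-- `p^{⊞_d t}`: the monic degree-`d` polynomial whose `d`-finite free cumulants are
`t · κ_n(p)`, `n = 1, …, d`. -/
noncomputable def convPow (d : ℕ) (p : Polynomial ℝ) (t : ℝ) : Polynomial ℝ :=
  polyOfCumulants d (fun n => t * finCumulant d (coeffA d p) n)

/-- A monic real-rooted polynomial `p` of degree `d` is infinitely divisible (w.r.t.
finite free convolution) if `p^{⊞_d t}` has only real roots for every `t > 0`. -/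
def InfinitelyDivisible (d : ℕ) (p : Polynomial ℝ) : Prop :=
  ∀ t : ℝ, 0 < t → (convPow d p t).Splits

/-- The Hermite polynomial `H_d(x) = d! Σ_{i=0}^{⌊d/2⌋} (−1)^i x^{d−2i}/(i!(d−2i)!2^i)`. -/
noncomputable def hermitePoly (d : ℕ) : Polynomial ℝ :=
  ∑ i ∈ Finset.range (d / 2 + 1),
    Polynomial.C ((Nat.factorial d : ℝ) * (-1 : ℝ) ^ i /
        ((Nat.factorial i : ℝ) * (Nat.factorial (d - 2 * i) : ℝ) * 2 ^ i)) *
      Polynomial.X ^ (d - 2 * i)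

/-- The polynomial `d^{−d/2} H_d(√d · x)` arising in the finite free central limit
theorem. -/
noncomputable def hermiteScaled (d : ℕ) : Polynomial ℝ :=
  Polynomial.C ((d : ℝ) ^ (-(d : ℝ) / 2)) *
    (hermitePoly d).comp (Polynomial.C (Real.sqrt d) * Polynomial.X)


/-- Power sum of a multiset. -/
def mpsum (s : Multiset ℝ) (n : ℕ) : ℝ := (s.map (· ^ n)).sum

lemma mpsum_cons (a : ℝ) (s : Multiset ℝ) (n : ℕ) :
    mpsum (a ::ₘ s) n = a ^ n + mpsum s n := by
  simp [mpsum]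

lemma mesymm_zero (s : Multiset ℝ) : s.esymm 0 = 1 := by
  simp [Multiset.esymm]

lemma mesymm_nil (n : ℕ) : (0 : Multiset ℝ).esymm (n + 1) = 0 := by
  simp [Multiset.esymm, Multiset.powersetCard_zero_right]

lemma mesymm_cons (a : ℝ) (s : Multiset ℝ) (n : ℕ) :
    (a ::ₘ s).esymm (n + 1) = s.esymm (n + 1) + a * s.esymm n := by
  simp only [Multiset.esymm, Multiset.powersetCard_cons, Multiset.map_add, Multiset.sum_add,
    Multiset.map_map, Function.comp]
  congr 1
  rw [show (Multiset.map (fun x => (a ::ₘ x).prod) (Multiset.powersetCard n s))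
      = Multiset.map (fun x => a * x.prod) (Multiset.powersetCard n s) from
    Multiset.map_congr rfl (fun x _ => by simp [Multiset.prod_cons]),
    ← Multiset.sum_map_mul_left]

lemma mesymm_one (s : Multiset ℝ) : s.esymm 1 = mpsum s 1 := by
  induction s using Multiset.induction with
  | empty => simp [mesymm_nil, mpsum]
  | cons a s ih =>
      rw [show (1:ℕ) = 0 + 1 from rfl] at ih ⊢
      rw [mesymm_cons, mpsum_cons, ih, mesymm_zero]
      ring

/-- Newton's identity for multisets of reals. -/
theorem mnewton (s : Multiset ℝ) (m : ℕ) :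
    mpsum s (m + 1)
      + (∑ k ∈ Finset.range m, (-1 : ℝ) ^ (k + 1) * s.esymm (k + 1) * mpsum s (m - k))
      + (m + 1 : ℝ) * (-1 : ℝ) ^ (m + 1) * s.esymm (m + 1) = 0 := by
  induction s using Multiset.induction generalizing m with
  | empty => simp [mpsum, mesymm_nil]
  | cons a s ih =>
      cases m with
      | zero =>
          simp only [Finset.range_zero, Finset.sum_empty, add_zero]
          rw [mesymm_cons, mpsum_cons, mesymm_zero, mesymm_one]
          have := ih 0
          simp only [Finset.range_zero, Finset.sum_empty, add_zero] at this
          rw [mesymm_one] at this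
          push_cast
          nlinarith [this]
      | succ M =>
          have h1 := ih (M + 1)
          have h2 := ih M
          simp only [mpsum_cons, mesymm_cons] at *
          have E : ∑ k ∈ Finset.range (M + 1),
                (-1 : ℝ) ^ (k + 1) * (s.esymm (k + 1) + a * s.esymm k)
                  * (a ^ (M + 1 - k) + mpsum s (M + 1 - k))
              = (∑ k ∈ Finset.range (M + 1),
                  (-1 : ℝ) ^ (k + 1) * s.esymm (k + 1) * mpsum s (M + 1 - k))
                - a * (∑ k ∈ Finset.range M,
                    (-1 : ℝ) ^ (k + 1) * s.esymm (k + 1) * mpsum s (M - k))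
                - a * mpsum s (M + 1) - a ^ (M + 2)
                + (-1 : ℝ) ^ (M + 1) * s.esymm (M + 1) * a := by
            have hsplit : ∀ k ∈ Finset.range (M + 1),
                (-1 : ℝ) ^ (k + 1) * (s.esymm (k + 1) + a * s.esymm k)
                  * (a ^ (M + 1 - k) + mpsum s (M + 1 - k))
                = ((-1 : ℝ) ^ (k + 1) * s.esymm (k + 1) * mpsum s (M + 1 - k))
                  + (((-1 : ℝ) ^ (k + 1) * s.esymm (k + 1) * a ^ (M + 1 - k))
                    + ((-1 : ℝ) ^ (k + 1) * (a * s.esymm k) * a ^ (M + 1 - k)))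
                  + ((-1 : ℝ) ^ (k + 1) * (a * s.esymm k) * mpsum s (M + 1 - k)) := by
              intro k _; ring
            rw [Finset.sum_congr rfl hsplit, Finset.sum_add_distrib, Finset.sum_add_distrib]
            have hT3 : ∑ k ∈ Finset.range (M + 1),
                (-1 : ℝ) ^ (k + 1) * (a * s.esymm k) * mpsum s (M + 1 - k)
                = -(a * mpsum s (M + 1))
                  - a * ∑ k ∈ Finset.range M,
                      (-1 : ℝ) ^ (k + 1) * s.esymm (k + 1) * mpsum s (M - k) := by
              rw [Finset.sum_range_succ']
              simp only [Nat.succ_sub_succ, Nat.sub_zero, mesymm_zero]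
              rw [show ∑ k ∈ Finset.range M,
                    (-1 : ℝ) ^ (k + 1 + 1) * (a * s.esymm (k + 1)) * mpsum s (M - k)
                  = -(a * ∑ k ∈ Finset.range M,
                      (-1 : ℝ) ^ (k + 1) * s.esymm (k + 1) * mpsum s (M - k)) by
                rw [Finset.mul_sum, ← Finset.sum_neg_distrib]
                exact Finset.sum_congr rfl fun k _ => by ring]
              ring
            have hT24 : (∑ k ∈ Finset.range (M + 1),
                  (-1 : ℝ) ^ (k + 1) * s.esymm (k + 1) * a ^ (M + 1 - k))
                + (∑ k ∈ Finset.range (M + 1),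
                  (-1 : ℝ) ^ (k + 1) * (a * s.esymm k) * a ^ (M + 1 - k))
                = -a ^ (M + 2) + (-1 : ℝ) ^ (M + 1) * s.esymm (M + 1) * a := by
              rw [Finset.sum_range_succ
                    (f := fun k => (-1 : ℝ) ^ (k + 1) * s.esymm (k + 1) * a ^ (M + 1 - k)),
                  Finset.sum_range_succ'
                    (f := fun k => (-1 : ℝ) ^ (k + 1) * (a * s.esymm k) * a ^ (M + 1 - k))]
              simp only [Nat.succ_sub_succ, Nat.sub_zero, mesymm_zero]
              rw [show M + 1 - M = 1 by omega]
              rw [show ∑ k ∈ Finset.range M,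
                    (-1 : ℝ) ^ (k + 1 + 1) * (a * s.esymm (k + 1)) * a ^ (M - k)
                  = -∑ k ∈ Finset.range M,
                      (-1 : ℝ) ^ (k + 1) * s.esymm (k + 1) * a ^ (M + 1 - k) by
                rw [← Finset.sum_neg_distrib]
                refine Finset.sum_congr rfl fun k hk => ?_
                have hk' : k < M := Finset.mem_range.1 hk
                rw [show M + 1 - k = (M - k) + 1 by omega, pow_succ]
                ring]
              ring
            rw [Finset.sum_add_distrib, hT24, hT3]
            ring
          push_cast at h1 h2 ⊢
          linear_combination h1 - a * h2 + E



lemma msum_swap {ι : Type*} (s : Finset ι) (R : Multiset ℝ) (f : ι → ℝ → ℝ) :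
    ∑ i ∈ s, (R.map (f i)).sum = (R.map (fun x => ∑ i ∈ s, f i x)).sum := by
  induction R using Multiset.induction with
  | empty => simp
  | cons a R ih => simp [Finset.sum_add_distrib, ih]

lemma quad_nonneg (r : ℕ) (α : ℕ → ℂ) (R : Multiset ℝ) :
    0 ≤ ∑ i ∈ Finset.Icc 1 r, ∑ j ∈ Finset.Icc 1 r,
        (α i * (starRingEnd ℂ) (α j)).re * mpsum R (i + j) := by
  have key : ∀ x : ℝ, ∑ i ∈ Finset.Icc 1 r, ∑ j ∈ Finset.Icc 1 r,
      (α i * (starRingEnd ℂ) (α j)).re * x ^ (i + j)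
      = (∑ i ∈ Finset.Icc 1 r, (α i).re * x ^ i) ^ 2
        + (∑ i ∈ Finset.Icc 1 r, (α i).im * x ^ i) ^ 2 := by
    intro x
    rw [sq, sq, Finset.sum_mul_sum, Finset.sum_mul_sum, ← Finset.sum_add_distrib]
    refine Finset.sum_congr rfl fun i _ => ?_
    rw [← Finset.sum_add_distrib]
    refine Finset.sum_congr rfl fun j _ => ?_
    simp only [Complex.mul_re, Complex.conj_re, Complex.conj_im, pow_add]
    ring
  have swap : ∑ i ∈ Finset.Icc 1 r, ∑ j ∈ Finset.Icc 1 r,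
      (α i * (starRingEnd ℂ) (α j)).re * mpsum R (i + j)
      = (R.map (fun x => ∑ i ∈ Finset.Icc 1 r, ∑ j ∈ Finset.Icc 1 r,
          (α i * (starRingEnd ℂ) (α j)).re * x ^ (i + j))).sum := by
    rw [← msum_swap]
    refine Finset.sum_congr rfl fun i _ => ?_
    rw [← msum_swap]
    refine Finset.sum_congr rfl fun j _ => ?_
    simp [mpsum, Multiset.sum_map_mul_left]
  rw [swap]
  apply Multiset.sum_nonneg
  intro y hy
  obtain ⟨x, _, rfl⟩ := Multiset.mem_map.1 hy
  rw [key x]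
  positivity

lemma setPartition_zero_parts (pi : SetPartition 0) : pi.parts = ∅ := by
  rw [← Finset.not_nonempty_iff_eq_empty]
  intro h
  rw [Finpartition.parts_nonempty_iff] at h
  exact h (by simp [Finset.univ_eq_empty, Finset.bot_eq_empty])

instance : Subsingleton (SetPartition 0) :=
  ⟨fun a b => Finpartition.ext (by rw [setPartition_zero_parts, setPartition_zero_parts])⟩

noncomputable instance : Inhabited (SetPartition 0) :=
  ⟨(Finpartition.empty (Finset (Fin 0))).copy (by simp [Finset.bot_eq_empty, Finset.univ_eq_empty])⟩

lemma card_setPartition_zero : Fintype.card (SetPartition 0) = 1 :=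
  Fintype.card_eq_one_iff.2 ⟨default, fun a => Subsingleton.elim a default⟩

lemma coeffOfCumulants_zero (d : ℕ) (κ : ℕ → ℝ) : coeffOfCumulants d κ 0 = 1 := by
  unfold coeffOfCumulants
  have h : ∀ pi : SetPartition 0,
      (d : ℝ) ^ pi.parts.card * mu0 0 pi * ∏ V ∈ pi.parts, κ V.card = 1 := by
    intro pi
    simp [setPartition_zero_parts pi, mu0]
  rw [Finset.sum_congr rfl fun pi _ => h pi]
  simp [card_setPartition_zero]

lemma coeff_polyOfCumulants (d : ℕ) (κ : ℕ → ℝ) {i : ℕ} (hi : i ≤ d) :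
    (polyOfCumulants d κ).coeff (d - i) = (-1 : ℝ) ^ i * coeffOfCumulants d κ i := by
  unfold polyOfCumulants
  rw [Polynomial.finset_sum_coeff]
  have h : ∀ j ∈ Finset.range (d + 1),
      (Polynomial.C ((-1 : ℝ) ^ j * coeffOfCumulants d κ j) * Polynomial.X ^ (d - j)).coeff (d - i)
      = if j = i then (-1 : ℝ) ^ j * coeffOfCumulants d κ j else 0 := by
    intro j hj
    rw [Polynomial.coeff_C_mul, Polynomial.coeff_X_pow]
    have hj' : j ≤ d := Nat.lt_succ_iff.1 (Finset.mem_range.1 hj)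
    have heq : (d - i = d - j) ↔ (j = i) := by omega
    simp only [heq, mul_ite, mul_one, mul_zero]
  rw [Finset.sum_congr rfl h, Finset.sum_ite_eq' (Finset.range (d + 1)) i]
  simp [Nat.lt_succ_iff.2 hi]

lemma natDegree_polyOfCumulants_le (d : ℕ) (κ : ℕ → ℝ) :
    (polyOfCumulants d κ).natDegree ≤ d := by
  unfold polyOfCumulants
  refine Polynomial.natDegree_sum_le_of_forall_le _ _ fun i _ => ?_
  refine le_trans (Polynomial.natDegree_C_mul_le _ _) ?_
  simp [Polynomial.natDegree_X_pow]

lemma coeff_polyOfCumulants_d (d : ℕ) (κ : ℕ → ℝ) :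
    (polyOfCumulants d κ).coeff d = 1 := by
  have := coeff_polyOfCumulants d κ (Nat.zero_le d)
  simpa [coeffOfCumulants_zero] using this

lemma monic_polyOfCumulants (d : ℕ) (κ : ℕ → ℝ) : (polyOfCumulants d κ).Monic :=
  Polynomial.monic_of_natDegree_le_of_coeff_eq_one d (natDegree_polyOfCumulants_le d κ)
    (coeff_polyOfCumulants_d d κ)

lemma natDegree_polyOfCumulants (d : ℕ) (κ : ℕ → ℝ) :
    (polyOfCumulants d κ).natDegree = d := by
  refine le_antisymm (natDegree_polyOfCumulants_le d κ) ?_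
  exact Polynomial.le_natDegree_of_ne_zero (by rw [coeff_polyOfCumulants_d]; norm_num)


/-- The one-block partition. -/
noncomputable def topSP (n : ℕ) [NeZero n] : SetPartition n :=
  Finpartition.indiscrete (by
    simpa [Finset.bot_eq_empty] using (Finset.univ_nonempty (α := Fin n)).ne_empty)

lemma topSP_parts (n : ℕ) [NeZero n] : (topSP n).parts = {Finset.univ} := rfl

lemma eq_topSP_of_card_le_one (n : ℕ) [NeZero n] (π : SetPartition n)
    (h : π.parts.card ≤ 1) : π = topSP n := by
  have hne : π.parts.Nonempty := by
    apply Finpartition.parts_nonempty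
    simpa [Finset.bot_eq_empty] using (Finset.univ_nonempty (α := Fin n)).ne_empty
  have hcard : π.parts.card = 1 := le_antisymm h (Finset.card_pos.2 hne)
  obtain ⟨v, hv⟩ := Finset.card_eq_one.1 hcard
  have hsup := π.sup_parts
  rw [hv, Finset.sup_singleton] at hsup
  have hv' : v = Finset.univ := by simpa using hsup
  apply Finpartition.ext
  rw [topSP_parts, hv, hv']

lemma mu0_topSP (n : ℕ) [NeZero n] :
    mu0 n (topSP n) = (-1 : ℝ) ^ (n - 1) * (Nat.factorial (n - 1) : ℝ) := by
  simp [mu0, topSP_parts, Finset.card_univ]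

/-- Linear coefficient in `t` of `a_n(p^{⊞ t})`. -/
noncomputable def bcoef (d : ℕ) (κ : ℕ → ℝ) (n : ℕ) : ℝ :=
  (Nat.descFactorial d n : ℝ) / ((d : ℝ) ^ n * (Nat.factorial n : ℝ)) *
    ((d : ℝ) * ((-1 : ℝ) ^ (n - 1) * (Nat.factorial (n - 1) : ℝ)) * κ n)

/-- Quadratic remainder of `a_n(p^{⊞ t})`. -/
noncomputable def cfun (d : ℕ) (κ : ℕ → ℝ) (n : ℕ) (t : ℝ) : ℝ :=
  (Nat.descFactorial d n : ℝ) / ((d : ℝ) ^ n * (Nat.factorial n : ℝ)) *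
    ∑ π ∈ Finset.univ.filter (fun π : SetPartition n => 2 ≤ π.parts.card),
      (d : ℝ) ^ π.parts.card * mu0 n π * (∏ V ∈ π.parts, κ V.card) * t ^ (π.parts.card - 2)

lemma cfun_continuous (d : ℕ) (κ : ℕ → ℝ) (n : ℕ) : Continuous (cfun d κ n) := by
  unfold cfun
  exact continuous_const.mul
    (continuous_finset_sum _ fun π _ => continuous_const.mul (continuous_pow _))

lemma coeffOfCumulants_smul_decomp (d n : ℕ) (hn : n ≠ 0) (κ : ℕ → ℝ) (t : ℝ) :
    coeffOfCumulants d (fun m => t * κ m) n = bcoef d κ n * t + t ^ 2 * cfun d κ n t := by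
  haveI : NeZero n := ⟨hn⟩
  unfold coeffOfCumulants bcoef cfun
  have hprod : ∀ π : SetPartition n,
      (d : ℝ) ^ π.parts.card * mu0 n π * ∏ V ∈ π.parts, (t * κ V.card)
      = (d : ℝ) ^ π.parts.card * mu0 n π * (t ^ π.parts.card * ∏ V ∈ π.parts, κ V.card) := by
    intro π
    rw [Finset.prod_mul_distrib, Finset.prod_const]
  rw [Finset.sum_congr rfl fun π _ => hprod π,
    ← Finset.sum_filter_add_sum_filter_not Finset.univ
      (fun π : SetPartition n => 2 ≤ π.parts.card)]
  have hfilt : Finset.univ.filter (fun π : SetPartition n => ¬ 2 ≤ π.parts.card)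
      = {topSP n} := by
    ext π
    simp only [Finset.mem_filter, Finset.mem_univ, true_and, Finset.mem_singleton, not_le]
    constructor
    · intro h; exact eq_topSP_of_card_le_one n π (by omega)
    · rintro rfl; simp [topSP_parts]
  rw [hfilt, Finset.sum_singleton, topSP_parts]
  have htop : (d : ℝ) ^ ({(Finset.univ : Finset (Fin n))} : Finset (Finset (Fin n))).card
        * mu0 n (topSP n)
        * (t ^ ({(Finset.univ : Finset (Fin n))} : Finset (Finset (Fin n))).card
          * ∏ V ∈ ({(Finset.univ : Finset (Fin n))} : Finset (Finset (Fin n))), κ V.card)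
      = (d : ℝ) * ((-1 : ℝ) ^ (n - 1) * (Nat.factorial (n - 1) : ℝ)) * κ n * t := by
    rw [mu0_topSP]
    simp [Finset.card_univ]
    ring
  have hsum : ∑ π ∈ Finset.univ.filter (fun π : SetPartition n => 2 ≤ π.parts.card),
        (d : ℝ) ^ π.parts.card * mu0 n π * (t ^ π.parts.card * ∏ V ∈ π.parts, κ V.card)
      = t ^ 2 * ∑ π ∈ Finset.univ.filter (fun π : SetPartition n => 2 ≤ π.parts.card),
        (d : ℝ) ^ π.parts.card * mu0 n π * (∏ V ∈ π.parts, κ V.card) * t ^ (π.parts.card - 2) := by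
    rw [Finset.mul_sum]
    refine Finset.sum_congr rfl fun π hπ => ?_
    have h2 : 2 ≤ π.parts.card := (Finset.mem_filter.1 hπ).2
    have ht : t ^ π.parts.card = t ^ 2 * t ^ (π.parts.card - 2) := by
      rw [← pow_add]; congr 1; omega
    rw [ht]; ring
  rw [htop, hsum]
  ring


lemma esymm_roots_polyOfCumulants (d : ℕ) (κ' : ℕ → ℝ)
    (hs : (polyOfCumulants d κ').Splits) {k : ℕ} (hk : k ≤ d) :
    (polyOfCumulants d κ').roots.esymm k = coeffOfCumulants d κ' k := by
  have hmon := monic_polyOfCumulants d κ'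
  have hcard : Multiset.card (polyOfCumulants d κ').roots = d := by
    have h := Polynomial.splits_iff_card_roots.1 hs
    rwa [natDegree_polyOfCumulants] at h
  have h1 : (polyOfCumulants d κ').coeff (d - k)
      = (-1 : ℝ) ^ k * (polyOfCumulants d κ').roots.esymm k := by
    conv_lhs => rw [hs.eq_prod_roots_of_monic hmon]
    rw [Multiset.prod_X_sub_C_coeff _ (by rw [hcard]; omega), hcard,
      show d - (d - k) = k by omega]
  have h2 := coeff_polyOfCumulants d κ' hk
  have h3 : (-1 : ℝ) ^ k * (polyOfCumulants d κ').roots.esymm k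
      = (-1 : ℝ) ^ k * coeffOfCumulants d κ' k := h1.symm.trans h2
  exact mul_left_cancel₀ (pow_ne_zero k (by norm_num)) h3

lemma card_roots_polyOfCumulants (d : ℕ) (κ' : ℕ → ℝ)
    (hs : (polyOfCumulants d κ').Splits) :
    Multiset.card (polyOfCumulants d κ').roots = d := by
  have h := Polynomial.splits_iff_card_roots.1 hs
  rwa [natDegree_polyOfCumulants] at h

lemma bcoef_linear_coeff (d : ℕ) (hd : d ≠ 0) (κ : ℕ → ℝ) (m : ℕ) :
    -((((m : ℕ) : ℝ) + 1) * (-1 : ℝ) ^ (m + 1) * bcoef d κ (m + 1))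
      = (d : ℝ) * ((Nat.descFactorial d (m + 1) : ℝ) / (d : ℝ) ^ (m + 1) * κ (m + 1)) := by
  unfold bcoef
  simp only [Nat.add_sub_cancel]
  have h1 : (Nat.factorial (m + 1) : ℝ) = ((m : ℝ) + 1) * (Nat.factorial m : ℝ) := by
    rw [Nat.factorial_succ]; push_cast; ring
  have hsq : (-1 : ℝ) ^ (m + 1) * (-1 : ℝ) ^ m = -1 := by
    rw [← pow_add]
    exact Odd.neg_one_pow ⟨m, by omega⟩
  have hfac : (Nat.factorial m : ℝ) ≠ 0 := Nat.cast_ne_zero.2 (Nat.factorial_ne_zero m)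
  have hd' : ((d : ℝ)) ≠ 0 := Nat.cast_ne_zero.2 hd
  have hm1 : ((m : ℝ) + 1) ≠ 0 := by positivity
  rw [h1]
  field_simp
  ring_nf
  have hpow : (-1 : ℝ) ^ (m * 2) = 1 := by
    rw [mul_comm, pow_mul]; norm_num
  rw [hpow]
  ring


/-- Key expansion: power sums of the roots of `p^{⊞ t}` are `d·κ~_n·t + O(t²)`. -/
lemma psum_roots_expansion (d : ℕ) (hd : d ≠ 0) (κ : ℕ → ℝ)
    (hsplit : ∀ t : ℝ, 0 < t → (polyOfCumulants d (fun m => t * κ m)).Splits) :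
    ∀ n, 1 ≤ n → n ≤ d → ∃ g : ℝ → ℝ, Continuous g ∧ ∀ t : ℝ, 0 < t →
      mpsum (polyOfCumulants d (fun m => t * κ m)).roots n
        = ((d : ℝ) * ((Nat.descFactorial d n : ℝ) / (d : ℝ) ^ n * κ n)) * t + t ^ 2 * g t := by
  intro n
  induction n using Nat.strong_induction_on with
  | _ n IH =>
    intro hn1 hnd
    obtain ⟨m, rfl⟩ : ∃ m, n = m + 1 := ⟨n - 1, by omega⟩
    have hex : ∀ k : ℕ, ∃ gk : ℝ → ℝ, Continuous gk ∧ (k < m → ∀ t : ℝ, 0 < t →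
        mpsum (polyOfCumulants d (fun m' => t * κ m')).roots (m - k)
          = ((d : ℝ) * ((Nat.descFactorial d (m - k) : ℝ) / (d : ℝ) ^ (m - k) * κ (m - k))) * t
            + t ^ 2 * gk t) := by
      intro k
      by_cases hk : k < m
      · obtain ⟨g, hg, hgt⟩ := IH (m - k) (by omega) (by omega) (by omega)
        exact ⟨g, hg, fun _ => hgt⟩
      · exact ⟨0, continuous_const, fun h => absurd h hk⟩
    choose G hGc hGt using hex
    refine ⟨fun t => -(((m : ℕ) : ℝ) + 1) * (-1 : ℝ) ^ (m + 1) * cfun d κ (m + 1) t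
      - ∑ k ∈ Finset.range m, (-1 : ℝ) ^ (k + 1)
          * ((bcoef d κ (k + 1) + t * cfun d κ (k + 1) t)
            * ((d : ℝ) * ((Nat.descFactorial d (m - k) : ℝ) / (d : ℝ) ^ (m - k) * κ (m - k))
              + t * G k t)), ?_, ?_⟩
    · apply Continuous.sub
      · exact continuous_const.mul (cfun_continuous d κ (m + 1))
      · refine continuous_finset_sum _ fun k _ => ?_
        exact continuous_const.mul
          ((continuous_const.add (continuous_id.mul (cfun_continuous d κ (k + 1)))).mul
            (continuous_const.add (continuous_id.mul (hGc k))))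
    · intro t ht
      have hs := hsplit t ht
      have hA : ∀ j, 1 ≤ j → j ≤ d →
          (polyOfCumulants d (fun m' => t * κ m')).roots.esymm j
            = bcoef d κ j * t + t ^ 2 * cfun d κ j t := by
        intro j hj1 hjd
        rw [esymm_roots_polyOfCumulants d _ hs hjd,
          coeffOfCumulants_smul_decomp d j (by omega) κ t]
      have hterm : ∀ k ∈ Finset.range m,
          (-1 : ℝ) ^ (k + 1) * (polyOfCumulants d (fun m' => t * κ m')).roots.esymm (k + 1)
            * mpsum (polyOfCumulants d (fun m' => t * κ m')).roots (m - k)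
          = t ^ 2 * ((-1 : ℝ) ^ (k + 1)
            * ((bcoef d κ (k + 1) + t * cfun d κ (k + 1) t)
              * ((d : ℝ) * ((Nat.descFactorial d (m - k) : ℝ) / (d : ℝ) ^ (m - k) * κ (m - k))
                + t * G k t))) := by
        intro k hk
        have hk' : k < m := Finset.mem_range.1 hk
        rw [hA (k + 1) (by omega) (by omega), hGt k hk' t ht]
        ring
      have hN := mnewton (polyOfCumulants d (fun m' => t * κ m')).roots m
      rw [Finset.sum_congr rfl hterm, ← Finset.mul_sum,
        hA (m + 1) (by omega) hnd] at hN
      have hb := bcoef_linear_coeff d hd κ m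
      push_cast at hN hb ⊢
      linear_combination hN + t * hb


/-- Conditional positive definiteness of the rescaled cumulants `κ~`. -/
lemma tilde_cpd (d : ℕ) (hd : d ≠ 0) (κ : ℕ → ℝ)
    (hsplit : ∀ t : ℝ, 0 < t → (polyOfCumulants d (fun m => t * κ m)).Splits)
    (r : ℕ) (hr : 1 ≤ r) (h2r : 2 * r ≤ d) (α : ℕ → ℂ) :
    0 ≤ ∑ i ∈ Finset.Icc 1 r, ∑ j ∈ Finset.Icc 1 r,
        (α i * (starRingEnd ℂ) (α j)).re
          * ((Nat.descFactorial d (i + j) : ℝ) / (d : ℝ) ^ (i + j) * κ (i + j)) := by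
  have hex : ∀ i j : ℕ, ∃ g : ℝ → ℝ, Continuous g ∧
      (i ∈ Finset.Icc 1 r → j ∈ Finset.Icc 1 r → ∀ t : ℝ, 0 < t →
        mpsum (polyOfCumulants d (fun m => t * κ m)).roots (i + j)
          = ((d : ℝ) * ((Nat.descFactorial d (i + j) : ℝ) / (d : ℝ) ^ (i + j) * κ (i + j))) * t
            + t ^ 2 * g t) := by
    intro i j
    by_cases hij : i ∈ Finset.Icc 1 r ∧ j ∈ Finset.Icc 1 r
    · obtain ⟨hi, hj⟩ := hij
      rw [Finset.mem_Icc] at hi hj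
      obtain ⟨g, hg, hgt⟩ := psum_roots_expansion d hd κ hsplit (i + j)
        (by omega) (by omega)
      exact ⟨g, hg, fun _ _ => hgt⟩
    · exact ⟨0, continuous_const, fun h1 h2 => absurd ⟨h1, h2⟩ hij⟩
  choose G hGc hGt using hex
  set K : ℝ := ∑ i ∈ Finset.Icc 1 r, ∑ j ∈ Finset.Icc 1 r,
      (α i * (starRingEnd ℂ) (α j)).re
        * ((Nat.descFactorial d (i + j) : ℝ) / (d : ℝ) ^ (i + j) * κ (i + j)) with hK
  set S : ℝ → ℝ := fun t => ∑ i ∈ Finset.Icc 1 r, ∑ j ∈ Finset.Icc 1 r,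
      (α i * (starRingEnd ℂ) (α j)).re * G i j t with hS
  have hpos : ∀ t : ℝ, 0 < t → 0 ≤ (d : ℝ) * K + t * S t := by
    intro t ht
    have hq := quad_nonneg r α (polyOfCumulants d (fun m => t * κ m)).roots
    have hF : ∑ i ∈ Finset.Icc 1 r, ∑ j ∈ Finset.Icc 1 r,
        (α i * (starRingEnd ℂ) (α j)).re
          * mpsum (polyOfCumulants d (fun m => t * κ m)).roots (i + j)
        = t * ((d : ℝ) * K + t * S t) := by
      have h1 : ∀ i ∈ Finset.Icc 1 r, ∀ j ∈ Finset.Icc 1 r,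
          (α i * (starRingEnd ℂ) (α j)).re
            * mpsum (polyOfCumulants d (fun m => t * κ m)).roots (i + j)
          = t * ((d : ℝ) * ((α i * (starRingEnd ℂ) (α j)).re
              * ((Nat.descFactorial d (i + j) : ℝ) / (d : ℝ) ^ (i + j) * κ (i + j))))
            + t ^ 2 * ((α i * (starRingEnd ℂ) (α j)).re * G i j t) := by
        intro i hi j hj
        rw [hGt i j hi hj t ht]
        ring
      rw [hK, hS]
      rw [Finset.sum_congr rfl fun i hi => Finset.sum_congr rfl fun j hj => h1 i hi j hj]
      simp only [Finset.sum_add_distrib, ← Finset.mul_sum]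
      ring
    rw [hF] at hq
    exact nonneg_of_mul_nonneg_right hq ht
  have hcont : Continuous fun t : ℝ => (d : ℝ) * K + t * S t := by
    refine continuous_const.add (continuous_id.mul ?_)
    exact continuous_finset_sum _ fun i _ =>
      continuous_finset_sum _ fun j _ => continuous_const.mul (hGc i j)
  have htend : Filter.Tendsto (fun t : ℝ => (d : ℝ) * K + t * S t)
      (nhdsWithin 0 (Set.Ioi 0)) (nhds ((d : ℝ) * K)) := by
    have h0 : (d : ℝ) * K + 0 * S 0 = (d : ℝ) * K := by ring
    have := hcont.tendsto 0
    rw [h0] at this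
    exact this.mono_left nhdsWithin_le_nhds
  have hdK : 0 ≤ (d : ℝ) * K :=
    ge_of_tendsto htend (eventually_nhdsWithin_of_forall fun x hx => hpos x hx)
  have hd' : (0 : ℝ) < d := by
    exact_mod_cast Nat.pos_of_ne_zero hd
  nlinarith [hdK, hd']


lemma pow_exp_fun_eq (m : ℕ) :
    (fun x : ℝ => Real.exp (-x) * x ^ ((m : ℝ) + 1 - 1)) = fun x : ℝ => x ^ m * Real.exp (-x) := by
  funext x
  rw [show (m : ℝ) + 1 - 1 = (m : ℝ) by ring, Real.rpow_natCast]
  ring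

lemma integrable_pow_exp (m : ℕ) :
    MeasureTheory.IntegrableOn (fun x : ℝ => x ^ m * Real.exp (-x)) (Set.Ioi 0) := by
  have h := Real.GammaIntegral_convergent (s := (m : ℝ) + 1) (by positivity)
  rwa [pow_exp_fun_eq] at h

lemma integral_pow_exp (m : ℕ) :
    ∫ x in Set.Ioi 0, x ^ m * Real.exp (-x) = (Nat.factorial m : ℝ) := by
  have h := Real.Gamma_eq_integral (s := (m : ℝ) + 1) (by positivity)
  rw [pow_exp_fun_eq] at h
  rw [← h, Real.Gamma_nat_eq_factorial]

/-- Conditional positive definiteness of the cumulants themselves. -/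
lemma kappa_cpd (d : ℕ) (hd : d ≠ 0) (κ : ℕ → ℝ)
    (hsplit : ∀ t : ℝ, 0 < t → (polyOfCumulants d (fun m => t * κ m)).Splits)
    (r : ℕ) (hr : 1 ≤ r) (h2r : 2 * r ≤ d) (α : ℕ → ℂ) :
    0 ≤ ∑ i ∈ Finset.Icc 1 r, ∑ j ∈ Finset.Icc 1 r,
        (α i * (starRingEnd ℂ) (α j)).re * κ (i + j) := by
  have hd' : (0 : ℝ) < d := by exact_mod_cast Nat.pos_of_ne_zero hd
  have hdfac : (0 : ℝ) < (Nat.factorial d : ℝ) := by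
    exact_mod_cast Nat.factorial_pos d
  -- the integrand
  set F : ℝ → ℝ := fun x => ∑ i ∈ Finset.Icc 1 r, ∑ j ∈ Finset.Icc 1 r,
      (α i * (starRingEnd ℂ) (α j)).re
        * ((Nat.descFactorial d (i + j) : ℝ) / (d : ℝ) ^ (i + j) * κ (i + j))
        * (d : ℝ) ^ (i + j) * (x ^ (d - (i + j)) * Real.exp (-x)) with hF
  -- nonnegativity of the integrand on (0,∞)
  have hFpos : ∀ x ∈ Set.Ioi (0 : ℝ), 0 ≤ F x := by
    intro x hx
    have hx0 : (0 : ℝ) < x := hx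
    set β : ℕ → ℂ := fun i => α i * ((((d : ℝ) / x) ^ i : ℝ) : ℂ) with hβ
    have hkey := tilde_cpd d hd κ hsplit r hr h2r β
    have hterm : ∀ i ∈ Finset.Icc 1 r, ∀ j ∈ Finset.Icc 1 r,
        (β i * (starRingEnd ℂ) (β j)).re
          * ((Nat.descFactorial d (i + j) : ℝ) / (d : ℝ) ^ (i + j) * κ (i + j))
          * (x ^ d * Real.exp (-x))
        = (α i * (starRingEnd ℂ) (α j)).re
          * ((Nat.descFactorial d (i + j) : ℝ) / (d : ℝ) ^ (i + j) * κ (i + j))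
          * (d : ℝ) ^ (i + j) * (x ^ (d - (i + j)) * Real.exp (-x)) := by
      intro i hi j hj
      rw [Finset.mem_Icc] at hi hj
      have hijd : i + j ≤ d := by omega
      have hre : (β i * (starRingEnd ℂ) (β j)).re
          = (α i * (starRingEnd ℂ) (α j)).re * (((d : ℝ) / x) ^ i * ((d : ℝ) / x) ^ j) := by
        rw [hβ]
        simp only [map_mul, Complex.conj_ofReal]
        simp only [Complex.mul_re, Complex.mul_im, Complex.ofReal_re, Complex.ofReal_im]
        ring
      rw [hre]
      have hxpow : ((d : ℝ) / x) ^ i * ((d : ℝ) / x) ^ j * x ^ d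
          = (d : ℝ) ^ (i + j) * x ^ (d - (i + j)) := by
        rw [div_pow, div_pow]
        rw [show x ^ (d - (i + j)) = x ^ d / x ^ (i + j) from
          pow_sub₀ x (ne_of_gt hx0) hijd]
        field_simp
        ring
      calc (α i * (starRingEnd ℂ) (α j)).re * (((d : ℝ) / x) ^ i * ((d : ℝ) / x) ^ j)
            * ((Nat.descFactorial d (i + j) : ℝ) / (d : ℝ) ^ (i + j) * κ (i + j))
            * (x ^ d * Real.exp (-x))
          = (α i * (starRingEnd ℂ) (α j)).re
            * ((Nat.descFactorial d (i + j) : ℝ) / (d : ℝ) ^ (i + j) * κ (i + j))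
            * (((d : ℝ) / x) ^ i * ((d : ℝ) / x) ^ j * x ^ d) * Real.exp (-x) := by ring
        _ = _ := by rw [hxpow]; ring
    have hsum : F x = (∑ i ∈ Finset.Icc 1 r, ∑ j ∈ Finset.Icc 1 r,
        (β i * (starRingEnd ℂ) (β j)).re
          * ((Nat.descFactorial d (i + j) : ℝ) / (d : ℝ) ^ (i + j) * κ (i + j)))
          * (x ^ d * Real.exp (-x)) := by
      rw [hF, Finset.sum_mul]
      refine Finset.sum_congr rfl fun i hi => ?_
      rw [Finset.sum_mul]
      exact (Finset.sum_congr rfl fun j hj => (hterm i hi j hj).symm)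
    rw [hsum]
    have hxe : 0 ≤ x ^ d * Real.exp (-x) := by positivity
    exact mul_nonneg hkey hxe
  -- each summand of F is integrable
  have hint : ∀ i ∈ Finset.Icc 1 r, ∀ j ∈ Finset.Icc 1 r, MeasureTheory.IntegrableOn
      (fun x : ℝ => (α i * (starRingEnd ℂ) (α j)).re
        * ((Nat.descFactorial d (i + j) : ℝ) / (d : ℝ) ^ (i + j) * κ (i + j))
        * (d : ℝ) ^ (i + j) * (x ^ (d - (i + j)) * Real.exp (-x))) (Set.Ioi 0) := by
    intro i _ j _
    exact (integrable_pow_exp (d - (i + j))).const_mul _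
  -- the integral of F equals the sum of factorial integrals
  have hintF : ∫ x in Set.Ioi 0, F x
      = ∑ i ∈ Finset.Icc 1 r, ∑ j ∈ Finset.Icc 1 r,
        (α i * (starRingEnd ℂ) (α j)).re
          * ((Nat.descFactorial d (i + j) : ℝ) / (d : ℝ) ^ (i + j) * κ (i + j))
          * (d : ℝ) ^ (i + j) * (Nat.factorial (d - (i + j)) : ℝ) := by
    rw [hF]
    rw [MeasureTheory.integral_finset_sum _ (fun i hi =>
      MeasureTheory.integrable_finset_sum _ (fun j hj => hint i hi j hj))]
    refine Finset.sum_congr rfl fun i hi => ?_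
    rw [MeasureTheory.integral_finset_sum _ (fun j hj => hint i hi j hj)]
    refine Finset.sum_congr rfl fun j hj => ?_
    rw [MeasureTheory.integral_const_mul, integral_pow_exp]
  have hFnonneg : 0 ≤ ∫ x in Set.Ioi 0, F x :=
    MeasureTheory.setIntegral_nonneg measurableSet_Ioi hFpos
  rw [hintF] at hFnonneg
  -- identify with the cumulant sum
  have hid : ∑ i ∈ Finset.Icc 1 r, ∑ j ∈ Finset.Icc 1 r,
      (α i * (starRingEnd ℂ) (α j)).re
        * ((Nat.descFactorial d (i + j) : ℝ) / (d : ℝ) ^ (i + j) * κ (i + j))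
        * (d : ℝ) ^ (i + j) * (Nat.factorial (d - (i + j)) : ℝ)
      = (Nat.factorial d : ℝ) * ∑ i ∈ Finset.Icc 1 r, ∑ j ∈ Finset.Icc 1 r,
        (α i * (starRingEnd ℂ) (α j)).re * κ (i + j) := by
    rw [Finset.mul_sum]
    refine Finset.sum_congr rfl fun i hi => ?_
    rw [Finset.mul_sum]
    refine Finset.sum_congr rfl fun j hj => ?_
    rw [Finset.mem_Icc] at hi hj
    have hijd : i + j ≤ d := by omega
    have hdesc : (Nat.descFactorial d (i + j) : ℝ) * (Nat.factorial (d - (i + j)) : ℝ)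
        = (Nat.factorial d : ℝ) := by
      rw [← Nat.cast_mul, mul_comm (Nat.descFactorial d (i + j)) _,
        Nat.factorial_mul_descFactorial hijd]
    have hdp : ((d : ℝ)) ^ (i + j) ≠ 0 := pow_ne_zero _ (ne_of_gt hd')
    rw [show (α i * (starRingEnd ℂ) (α j)).re
          * ((Nat.descFactorial d (i + j) : ℝ) / (d : ℝ) ^ (i + j) * κ (i + j))
          * (d : ℝ) ^ (i + j) * (Nat.factorial (d - (i + j)) : ℝ)
        = (α i * (starRingEnd ℂ) (α j)).re * κ (i + j) * (Nat.factorial (d - (i + j)) : ℝ)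
          * ((Nat.descFactorial d (i + j) : ℝ) / (d : ℝ) ^ (i + j) * (d : ℝ) ^ (i + j)) by
        ring, div_mul_cancel₀ _ hdp]
    linear_combination (α i * (starRingEnd ℂ) (α j)).re * κ (i + j) * hdesc
  rw [hid] at hFnonneg
  nlinarith [hFnonneg, hdfac]

open scoped ComplexOrder

lemma complex_sum_nonneg (r : ℕ) (α : ℕ → ℂ) (c : ℕ → ℝ)
    (h : 0 ≤ ∑ i ∈ Finset.Icc 1 r, ∑ j ∈ Finset.Icc 1 r,
      (α i * (starRingEnd ℂ) (α j)).re * c (i + j)) :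
    0 ≤ ∑ i ∈ Finset.Icc 1 r, ∑ j ∈ Finset.Icc 1 r,
      α i * (starRingEnd ℂ) (α j) * ((c (i + j) : ℝ) : ℂ) := by
  rw [Complex.le_def]
  constructor
  · simp only [Complex.re_sum, Complex.zero_re]
    convert h using 1
    refine Finset.sum_congr rfl fun i _ => ?_
    refine Finset.sum_congr rfl fun j _ => ?_
    simp [Complex.mul_re, Complex.ofReal_re, Complex.ofReal_im]
  · simp only [Complex.im_sum, Complex.zero_im]
    have hanti : ∀ i j : ℕ, (α i * (starRingEnd ℂ) (α j) * ((c (i + j) : ℝ) : ℂ)).im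
        = -((α j * (starRingEnd ℂ) (α i) * ((c (j + i) : ℝ) : ℂ)).im) := by
      intro i j
      rw [add_comm j i]
      simp only [Complex.mul_im, Complex.mul_re, Complex.ofReal_re, Complex.ofReal_im,
        Complex.conj_re, Complex.conj_im]
      ring
    have h2 : ∑ i ∈ Finset.Icc 1 r, ∑ j ∈ Finset.Icc 1 r,
        (α i * (starRingEnd ℂ) (α j) * ((c (i + j) : ℝ) : ℂ)).im
        = -∑ i ∈ Finset.Icc 1 r, ∑ j ∈ Finset.Icc 1 r,
          (α i * (starRingEnd ℂ) (α j) * ((c (i + j) : ℝ) : ℂ)).im := by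
      conv_lhs => rw [Finset.sum_comm]
      rw [← Finset.sum_neg_distrib]
      refine Finset.sum_congr rfl fun i _ => ?_
      rw [← Finset.sum_neg_distrib]
      exact Finset.sum_congr rfl fun j _ => hanti j i
    linarith [h2]



/-- **Proposition 6.3**: if a monic real-rooted polynomial `p` of degree `d` is
infinitely divisible w.r.t. finite free convolution, then both the sequence
`κ~_n = ((d)_n/d^n) κ_n` and the sequence `κ_n` of its `d`-finite free cumulants are
conditionally positive definite. -/
theorem infinitely_divisible_cond_pos_def (d : ℕ) (p : Polynomial ℝ)
    (hmonic : p.Monic) (hdeg : p.natDegree = d) (hreal : p.Splits)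
    (hdiv : InfinitelyDivisible d p)
    (r : ℕ) (hr : 1 ≤ r) (h2r : 2 * r ≤ d) (α : ℕ → ℂ) :
    0 ≤ (∑ i ∈ Finset.Icc 1 r, ∑ j ∈ Finset.Icc 1 r,
          α i * (starRingEnd ℂ) (α j) *
            (((Nat.descFactorial d (i + j) : ℝ) / (d : ℝ) ^ (i + j) *
                finCumulant d (coeffA d p) (i + j) : ℝ) : ℂ)) ∧
      0 ≤ (∑ i ∈ Finset.Icc 1 r, ∑ j ∈ Finset.Icc 1 r,
          α i * (starRingEnd ℂ) (α j) *
            ((finCumulant d (coeffA d p) (i + j) : ℝ) : ℂ)) := by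
  have hd : d ≠ 0 := by omega
  have hsplit : ∀ t : ℝ, 0 < t →
      (polyOfCumulants d (fun m => t * finCumulant d (coeffA d p) m)).Splits :=
    fun t ht => hdiv t ht
  constructor
  · exact complex_sum_nonneg r α
      (fun n => (Nat.descFactorial d n : ℝ) / (d : ℝ) ^ n * finCumulant d (coeffA d p) n)
      (tilde_cpd d hd _ hsplit r hr h2r α)
  · exact complex_sum_nonneg r α (fun n => finCumulant d (coeffA d p) n)
      (kappa_cpd d hd _ hsplit r hr h2r α)
end

section
/- Let p(x) = Σ_{i=0}^d x^{d−i}(−1)^i a^p_i be the monic polynomial of degree d whose d-finite free cumulants satisfy κ_2(p) = 1 and κ_n(p) = 0 for all n ≠ 2 with 1 ≤ n ≤ d. Then a^p_n = 0 for n odd and a^p_{2i} = (−1)^i (d)_{2i} / (d^i 2^i i!) for 0 ≤ 2i ≤ d; equivalently, p(x) = d^{−d/2} H_d(√d · x), where H_d is the Hermite polynomial H_d(x) = d! Σ_{i=0}^{⌊d/2⌋} (−1)^i x^{d−2i} / (i! (d−2i)! 2^i). -/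
open Finset Polynomial
open scoped Classical

section CLTAux

open Nat

/-- Numeric recursion computing partition sums. -/
noncomputable def cltG (f : ℕ → ℝ) : ℕ → (ℕ → ℝ) → ℝ
  | 0, w => w 0
  | (n+1), w => ∑ k ∈ Finset.range (n+1),
      (n.choose k : ℝ) * f (k+1) * cltG f (n - k) (fun j => w (j+1))
decreasing_by exact Nat.lt_succ_of_le (Nat.sub_le n k)

variable {α : Type*} [DecidableEq α]

lemma clt_parts_avoid (s : Finset α) (P : Finpartition s) (T : Finset α) (hT : T ∈ P.parts) :
    (P.avoid T).parts = P.parts.erase T := by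
  ext V
  rw [Finpartition.mem_avoid, Finset.mem_erase]
  constructor
  · rintro ⟨d, hd, hdT, rfl⟩
    have hne : d ≠ T := by
      rintro rfl; exact hdT le_rfl
    have hdis : Disjoint d T := P.disjoint hd hT hne
    rw [Finset.sdiff_eq_self_of_disjoint hdis]
    exact ⟨hne, hd⟩
  · rintro ⟨hne, hV⟩
    refine ⟨V, hV, ?_, ?_⟩
    · intro hle
      obtain ⟨x, hx⟩ := P.nonempty_of_mem_parts hV
      have : ¬ Disjoint V T := Finset.not_disjoint_iff.2 ⟨x, hx, hle hx⟩
      exact this (P.disjoint hV hT hne)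
    · exact Finset.sdiff_eq_self_of_disjoint (P.disjoint hV hT hne)

lemma clt_key_step (f w : ℕ → ℝ) (s : Finset α) (a : α) (ha : a ∈ s) :
    ∑ π : Finpartition s, w π.parts.card * ∏ V ∈ π.parts, (f V.card)
    = ∑ T ∈ s.powerset.filter (a ∈ ·),
        f T.card * ∑ Q : Finpartition (s \ T),
          w (Q.parts.card + 1) * ∏ V ∈ Q.parts, (f V.card) := by
  rw [← Finset.sum_fiberwise_of_maps_to (g := fun π : Finpartition s => π.part a)
    (t := s.powerset.filter (a ∈ ·))
    (fun π _ => by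
      simp only [Finset.mem_filter, Finset.mem_powerset]
      exact ⟨π.le (π.part_mem.2 ha), π.mem_part ha⟩)]
  refine Finset.sum_congr rfl (fun T hT => ?_)
  simp only [Finset.mem_filter, Finset.mem_powerset] at hT
  obtain ⟨hTs, haT⟩ := hT
  have hTne : T ≠ (⊥ : Finset α) := by
    rintro rfl; exact absurd haT (Finset.notMem_empty a)
  have hdis : Disjoint (s \ T) T := sdiff_disjoint
  have hsup : (s \ T) ⊔ T = s := sdiff_sup_cancel hTs
  rw [Finset.mul_sum]
  refine Finset.sum_bij' (fun π _ => π.avoid T)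
    (fun Q _ => Q.extend hTne hdis hsup) ?_ ?_ ?_ ?_ ?_
  · intro π hπ; exact Finset.mem_univ _
  · intro Q hQ
    simp only [Finset.mem_univ, Finset.mem_filter, true_and]
    exact (Q.extend hTne hdis hsup).part_eq_of_mem (by simp [Finpartition.extend]) haT
  · intro π hπ
    simp only [Finset.mem_univ, Finset.mem_filter, true_and] at hπ
    have hTp : T ∈ π.parts := hπ ▸ π.part_mem.2 ha
    apply Finpartition.ext
    simp only [Finpartition.extend]
    rw [clt_parts_avoid s π T hTp, Finset.insert_erase hTp]
  · intro Q hQ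
    have hTp : T ∈ (Q.extend hTne hdis hsup).parts := by simp [Finpartition.extend]
    have hTnotin : T ∉ Q.parts := by
      intro h
      have h2 : a ∈ s \ T := Q.le h haT
      exact (Finset.mem_sdiff.1 h2).2 haT
    apply Finpartition.ext
    rw [clt_parts_avoid _ _ T hTp]
    simp only [Finpartition.extend]
    exact Finset.erase_insert hTnotin
  · intro π hπ
    simp only [Finset.mem_univ, Finset.mem_filter, true_and] at hπ
    have hTp : T ∈ π.parts := hπ ▸ π.part_mem.2 ha
    rw [clt_parts_avoid s π T hTp]
    rw [Finset.card_erase_of_mem hTp]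
    rw [← Finset.prod_erase_mul _ _ hTp]
    have hc : 1 ≤ π.parts.card := Finset.card_pos.2 ⟨T, hTp⟩
    rw [Nat.sub_add_cancel hc]
    ring

lemma clt_sum_finpartition_eq (f : ℕ → ℝ) :
    ∀ (n : ℕ) (s : Finset α), s.card = n → ∀ (w : ℕ → ℝ),
    ∑ π : Finpartition s, w π.parts.card * ∏ V ∈ π.parts, (f V.card) = cltG f n w := by
  intro n
  induction n using Nat.strong_induction_on with
  | _ n IH =>
  intro s hs w
  match n, hs with
  | 0, hs =>
    have hse : s = ∅ := Finset.card_eq_zero.1 hs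
    subst hse
    have hu : ∀ π : Finpartition (∅ : Finset α), π.parts = ∅ := by
      intro π
      refine Finset.eq_empty_of_forall_notMem (fun V hV => ?_)
      obtain ⟨x, hx⟩ := π.nonempty_of_mem_parts hV
      exact absurd (π.le hV hx) (Finset.notMem_empty x)
    have huniq : ∀ π : Finpartition (∅ : Finset α), π = Finpartition.empty (Finset α) := by
      intro π; apply Finpartition.ext; rw [hu π]; rfl
    rw [show (Finset.univ : Finset (Finpartition (∅ : Finset α)))
        = {Finpartition.empty (Finset α)} from Finset.eq_singleton_iff_unique_mem.2
          ⟨Finset.mem_univ _, fun π _ => huniq π⟩]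
    simp [cltG, Finpartition.empty]
  | (m+1), hs =>
    obtain ⟨a, ha⟩ : s.Nonempty := Finset.card_pos.1 (hs ▸ Nat.succ_pos m)
    rw [clt_key_step f w s a ha]
    have step2 : ∀ T ∈ s.powerset.filter (a ∈ ·),
        f T.card * (∑ Q : Finpartition (s \ T),
          w (Q.parts.card + 1) * ∏ V ∈ Q.parts, (f V.card))
        = f T.card * cltG f (m + 1 - T.card) (fun j => w (j+1)) := by
      intro T hT
      simp only [Finset.mem_filter, Finset.mem_powerset] at hT
      have hcard : (s \ T).card = m + 1 - T.card := by
        rw [Finset.card_sdiff_of_subset hT.1, hs]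
      have hTlt : m + 1 - T.card < m + 1 := by
        have : 0 < T.card := Finset.card_pos.2 ⟨a, hT.2⟩
        omega
      have h := IH _ hTlt _ hcard (fun j => w (j+1))
      rw [← h]
    rw [Finset.sum_congr rfl step2]
    have hins : s = insert a (s.erase a) := (Finset.insert_erase ha).symm
    have hnotmem : a ∉ s.erase a := Finset.notMem_erase a s
    calc ∑ T ∈ s.powerset.filter (a ∈ ·), f T.card * cltG f (m + 1 - T.card) (fun j => w (j+1))
        = ∑ T ∈ s.powerset, (if a ∈ T then f T.card * cltG f (m + 1 - T.card) (fun j => w (j+1)) else 0) := by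
          rw [Finset.sum_filter]
      _ = ∑ T ∈ (s.erase a).powerset,
            (if a ∈ T then f T.card * cltG f (m + 1 - T.card) (fun j => w (j+1)) else 0)
          + ∑ T ∈ (s.erase a).powerset,
            (if a ∈ insert a T then f (insert a T).card * cltG f (m + 1 - (insert a T).card) (fun j => w (j+1)) else 0) := by
          conv_lhs => rw [hins]
          rw [Finset.sum_powerset_insert hnotmem]
      _ = ∑ T ∈ (s.erase a).powerset, f (T.card + 1) * cltG f (m - T.card) (fun j => w (j+1)) := by
          rw [Finset.sum_eq_zero (fun T hT => by
            simp only [Finset.mem_powerset] at hT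
            rw [if_neg (fun h => hnotmem (hT h))]), zero_add]
          refine Finset.sum_congr rfl (fun T hT => ?_)
          simp only [Finset.mem_powerset] at hT
          have haT : a ∉ T := fun h => hnotmem (hT h)
          rw [if_pos (Finset.mem_insert_self a T), Finset.card_insert_of_notMem haT]
          congr 2
          omega
      _ = ∑ k ∈ Finset.range (m + 1), ∑ T ∈ Finset.powersetCard k (s.erase a),
            f (T.card + 1) * cltG f (m - T.card) (fun j => w (j+1)) := by
          rw [Finset.sum_powerset, Finset.card_erase_of_mem ha, hs]
          have h3 : m + 1 - 1 + 1 = m + 1 := by omega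
          rw [h3]
      _ = cltG f (m+1) w := by
          rw [cltG]
          refine Finset.sum_congr rfl (fun k hk => ?_)
          rw [Finset.sum_congr rfl (fun T hT => by
            rw [(Finset.mem_powersetCard.1 hT).2]), Finset.sum_const,
            Finset.card_powersetCard, Finset.card_erase_of_mem ha, hs, nsmul_eq_mul, ← mul_assoc]
          norm_num

lemma clt_fact_eq_dd : ∀ n : ℕ, n ! = n‼ * (n-1)‼ := by
  intro n
  induction n using Nat.strong_induction_on with
  | _ n IH =>
  match n with
  | 0 => rfl
  | 1 => rfl
  | (n+2) =>
    have h1 : (n+1)! = (n+1)‼ * n‼ := by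
      have := IH (n+1) (by omega)
      simpa using this
    calc (n+2)! = (n+2) * (n+1)! := rfl
      _ = (n+2) * ((n+1)‼ * n‼) := by rw [h1]
      _ = ((n+2) * n‼) * (n+1)‼ := by ring
      _ = (n+2)‼ * (n+2-1)‼ := by rw [Nat.doubleFactorial_add_two]; rfl

lemma clt_comb_nat (i r : ℕ) :
    (2*i+2*r+1).choose (2*i+1) * (2*i+1)‼ * (2*r-1)‼ = (2*i+2*r+1)‼ * ((i+r).choose i) := by
  have key : ((2*i+2*r+1).choose (2*i+1) * (2*i+1)‼ * (2*r-1)‼) * ((2*i)‼ * (2*r)‼)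
      = ((2*i+2*r+1)‼ * ((i+r).choose i)) * ((2*i)‼ * (2*r)‼) := by
    have lhs : ((2*i+2*r+1).choose (2*i+1) * (2*i+1)‼ * (2*r-1)‼) * ((2*i)‼ * (2*r)‼)
        = (2*i+2*r+1)! := by
      have h1 : (2*i+1)! = (2*i+1)‼ * (2*i)‼ := by
        have := clt_fact_eq_dd (2*i+1); simpa using this
      have h2 : (2*r)! = (2*r)‼ * (2*r-1)‼ := clt_fact_eq_dd (2*r)
      have h3 : (2*i+2*r+1).choose (2*i+1) * (2*i+1)! * (2*r)! = (2*i+2*r+1)! := by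
        have h4 : (2*i+1) ≤ 2*i+2*r+1 := by omega
        have := Nat.choose_mul_factorial_mul_factorial h4
        have h5 : 2*i+2*r+1 - (2*i+1) = 2*r := by omega
        rw [h5] at this
        exact this
      calc ((2*i+2*r+1).choose (2*i+1) * (2*i+1)‼ * (2*r-1)‼) * ((2*i)‼ * (2*r)‼)
          = (2*i+2*r+1).choose (2*i+1) * ((2*i+1)‼ * (2*i)‼) * ((2*r)‼ * (2*r-1)‼) := by ring
        _ = (2*i+2*r+1).choose (2*i+1) * (2*i+1)! * (2*r)! := by rw [h1, h2]
        _ = (2*i+2*r+1)! := h3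
    have rhs : ((2*i+2*r+1)‼ * ((i+r).choose i)) * ((2*i)‼ * (2*r)‼)
        = (2*i+2*r+1)! := by
      have h1 : (2*i)‼ = 2^i * i ! := Nat.doubleFactorial_two_mul i
      have h2 : (2*r)‼ = 2^r * r ! := Nat.doubleFactorial_two_mul r
      have h3 : (i+r).choose i * i ! * r ! = (i+r)! := by
        have := Nat.choose_mul_factorial_mul_factorial (Nat.le_add_right i r)
        simpa using this
      have h4 : (2*(i+r))‼ = 2^(i+r) * (i+r)! := Nat.doubleFactorial_two_mul (i+r)
      have h5 : (2*i+2*r+1)! = (2*i+2*r+1)‼ * (2*(i+r))‼ := by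
        have := clt_fact_eq_dd (2*i+2*r+1)
        have h6 : 2*i+2*r+1-1 = 2*(i+r) := by omega
        rw [h6] at this
        exact this
      calc ((2*i+2*r+1)‼ * ((i+r).choose i)) * ((2*i)‼ * (2*r)‼)
          = (2*i+2*r+1)‼ * ((i+r).choose i * i ! * r !) * (2^i * 2^r) := by
            rw [h1, h2]; ring
        _ = (2*i+2*r+1)‼ * (i+r)! * 2^(i+r) := by rw [h3, pow_add]
        _ = (2*i+2*r+1)‼ * (2*(i+r))‼ := by rw [h4]; ring
        _ = (2*i+2*r+1)! := h5.symm
    rw [lhs, rhs]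
  have hpos : 0 < (2*i)‼ * (2*r)‼ :=
    Nat.mul_pos (Nat.doubleFactorial_pos _) (Nat.doubleFactorial_pos _)
  exact Nat.eq_of_mul_eq_mul_right hpos key

lemma clt_binom_sum (x : ℝ) (M : ℕ) :
    ∑ i ∈ range (M+1), (M.choose i : ℝ) * (-1)^i * x^(M-i) = (x-1)^M := by
  rw [show x - 1 = (-1) + x by ring, add_pow]
  exact Finset.sum_congr rfl (fun i hi => by ring)

lemma clt_sum_range_even_odd (h : ℕ → ℝ) (m : ℕ) :
    ∑ k ∈ range (2*m), h k = ∑ i ∈ range m, h (2*i) + ∑ i ∈ range m, h (2*i+1) := by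
  induction m with
  | zero => simp
  | succ m IH =>
    have h2 : 2*(m+1) = (2*m) + 1 + 1 := by ring
    rw [h2, Finset.sum_range_succ, Finset.sum_range_succ,
      Finset.sum_range_succ (fun i => h (2*i)), Finset.sum_range_succ (fun i => h (2*i+1)), IH]
    ring

noncomputable def cltF (c : ℝ) (k : ℕ) : ℝ :=
  if Even k then (-1)^(k/2) * ((k-1)‼ : ℝ) * c^(k/2) else 0

noncomputable def cltW (j : ℕ) : ℕ → ℝ := fun k => (-1)^(k+j) * ((k + j - 1)! : ℝ)

noncomputable def cltP (c : ℝ) (n j : ℕ) : ℝ :=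
  if Even n then (-1)^j * (((j-1)! : ℕ) : ℝ) * ((n-1)‼ : ℝ) * c^(n/2) * (j:ℝ)^(n/2) else 0

lemma cltW_succ (j : ℕ) : (fun k => cltW j (k+1)) = cltW (j+1) := by
  funext k
  simp only [cltW]
  rw [show k+1+j = k+(j+1) from by omega]

lemma cltF_odd (c : ℝ) (i : ℕ) : cltF c (2*i+1) = 0 := by
  simp [cltF, Nat.even_add_one, parity_simps]

lemma cltF_even (c : ℝ) (i : ℕ) : cltF c (2*i+2) = (-1)^(i+1) * ((2*i+1)‼ : ℝ) * c^(i+1) := by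
  have h1 : (2*i+2) = 2*(i+1) := by ring
  have h2 : Even (2*i+2) := ⟨i+1, by omega⟩
  rw [cltF, if_pos h2, h1, Nat.mul_div_cancel_left _ (by norm_num : 0 < 2),
    show 2*(i+1)-1 = 2*i+1 from by omega]

lemma cltP_odd (c : ℝ) (n j : ℕ) (hn : ¬ Even n) : cltP c n j = 0 := by
  rw [cltP, if_neg hn]

lemma cltP_even (c : ℝ) (r j : ℕ) :
    cltP c (2*r) j = (-1)^j * (((j-1)! : ℕ) : ℝ) * ((2*r-1)‼ : ℝ) * c^r * (j:ℝ)^r := by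
  rw [cltP, if_pos ⟨r, by omega⟩, Nat.mul_div_cancel_left _ (by norm_num : 0 < 2)]

lemma clt_term_eval (c : ℝ) (i r j : ℕ) (hj : 1 ≤ j) :
    ((2*i+2*r+1).choose (2*i+1) : ℝ) * cltF c (2*i+2) * cltP c (2*r) (j+1)
    = (((2*i+2*r+1)‼ : ℝ) * (((j-1)! : ℕ) : ℝ) * c^(i+r+1) * (-1)^j * (j:ℝ)) *
      (((i+r).choose i : ℝ) * (-1)^i * ((j:ℝ)+1)^r) := by
  rw [cltF_even, cltP_even]
  have hcomb : ((2*i+2*r+1).choose (2*i+1) : ℝ) * ((2*i+1)‼ : ℝ) * ((2*r-1)‼ : ℝ)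
      = ((2*i+2*r+1)‼ : ℝ) * ((i+r).choose i : ℝ) := by
    exact_mod_cast congrArg (fun x : ℕ => (x : ℝ)) (clt_comb_nat i r)
  have hfact : ((j ! : ℕ) : ℝ) = (j : ℝ) * (((j-1)! : ℕ) : ℝ) := by
    rw [← Nat.mul_factorial_pred (by omega : j ≠ 0)]
    push_cast
    ring
  have hj1 : (j+1-1)! = j ! := rfl
  rw [hj1]
  push_cast
  linear_combination ((-1:ℝ)^(i+j) * c^(i+r+1) * ((j:ℝ)+1)^r) *
    ((j ! : ℝ) * hcomb + ((2*i+2*r+1)‼ : ℝ) * ((i+r).choose i : ℝ) * hfact)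

lemma clt_Gstar (c : ℝ) : ∀ n j, 1 ≤ j → cltG (cltF c) n (cltW j) = cltP c n j := by
  intro n
  induction n using Nat.strong_induction_on with
  | _ n IH =>
  intro j hj
  match n with
  | 0 =>
    rw [cltG, cltP, if_pos Even.zero]
    simp [cltW]
  | (N+1) =>
    rw [cltG, cltW_succ]
    have hterm : ∀ k ∈ range (N+1),
        (N.choose k : ℝ) * cltF c (k+1) * cltG (cltF c) (N - k) (cltW (j+1))
        = (N.choose k : ℝ) * cltF c (k+1) * cltP c (N-k) (j+1) := by
      intro k hk
      rw [IH (N-k) (by omega) (j+1) (by omega)]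
    rw [Finset.sum_congr rfl hterm]
    rcases Nat.even_or_odd (N+1) with he | ho
    · obtain ⟨m, hm⟩ : ∃ m, N + 1 = 2*m := by
        rcases he with ⟨t, ht⟩; exact ⟨t, by omega⟩
      have hm1 : 1 ≤ m := by omega
      rw [show range (N+1) = range (2*m) by rw [hm]]
      rw [clt_sum_range_even_odd]
      have heven0 : ∀ i ∈ range m,
          (N.choose (2*i) : ℝ) * cltF c (2*i+1) * cltP c (N-(2*i)) (j+1) = 0 := by
        intro i _
        rw [cltF_odd]; ring
      rw [Finset.sum_eq_zero heven0, zero_add]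
      have hodd : ∀ i ∈ range m,
          (N.choose (2*i+1) : ℝ) * cltF c (2*i+1+1) * cltP c (N-(2*i+1)) (j+1)
          = ((N‼ : ℝ) * (((j-1)! : ℕ) : ℝ) * c^m * (-1)^j * (j:ℝ)) *
            (((m-1).choose i : ℝ) * (-1)^i * ((j:ℝ)+1)^(m-1-i)) := by
        intro i hi
        have him : i < m := Finset.mem_range.1 hi
        have hN : N = 2*i+2*(m-1-i)+1 := by omega
        have hNr : N - (2*i+1) = 2*(m-1-i) := by omega
        rw [hNr, show 2*i+1+1 = 2*i+2 by omega]
        conv_lhs => rw [hN]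
        rw [clt_term_eval c i (m-1-i) j hj]
        rw [show i+(m-1-i)+1 = m by omega, show i+(m-1-i) = m-1 by omega,
          show 2*i+2*(m-1-i)+1 = N by omega]
      rw [Finset.sum_congr rfl hodd, ← Finset.mul_sum]
      have hbin : ∑ i ∈ range m, (((m-1).choose i : ℝ) * (-1)^i * ((j:ℝ)+1)^(m-1-i))
          = (j:ℝ)^(m-1) := by
        have hb := clt_binom_sum ((j:ℝ)+1) (m-1)
        rw [show m - 1 + 1 = m by omega] at hb
        rw [hb]
        ring_nf
      rw [hbin]
      rw [show N + 1 = 2*m from hm, cltP_even]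
      have hjm : (j:ℝ)^m = (j:ℝ) * (j:ℝ)^(m-1) := by
        conv_lhs => rw [show m = (m-1)+1 by omega]
        rw [_root_.pow_succ']
      rw [show (2*m - 1) = N by omega, hjm]
      ring
    · have hNe : Even N := by
        rcases ho with ⟨t, ht⟩; exact ⟨t, by omega⟩
      rw [cltP_odd c _ j (by rwa [Nat.even_add_one, not_not])]
      refine Finset.sum_eq_zero (fun k hk => ?_)
      rcases Nat.even_or_odd k with hke | hko
      · have : ¬ Even (k+1) := by rwa [Nat.even_add_one, not_not]
        rw [cltF, if_neg this]
        ring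
      · have hkN : k ≤ N := by have := Finset.mem_range.1 hk; omega
        have : ¬ Even (N - k) := by
          rw [Nat.even_sub hkN]
          intro hiff
          exact (Nat.not_even_iff_odd.2 hko) (hiff.1 hNe)
        rw [cltP_odd c _ _ this]
        ring

lemma clt_term_eval0 (c : ℝ) (i r : ℕ) :
    ((2*i+2*r+1).choose (2*i+1) : ℝ) * cltF c (2*i+2) * cltP c (2*r) 1
    = (((2*i+2*r+1)‼ : ℝ) * c^(i+r+1)) *
      (((i+r).choose i : ℝ) * (-1)^i * (1:ℝ)^(r)) := by
  rw [cltF_even, cltP_even]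
  have hcomb : ((2*i+2*r+1).choose (2*i+1) : ℝ) * ((2*i+1)‼ : ℝ) * ((2*r-1)‼ : ℝ)
      = ((2*i+2*r+1)‼ : ℝ) * ((i+r).choose i : ℝ) := by
    exact_mod_cast congrArg (fun x : ℕ => (x : ℝ)) (clt_comb_nat i r)
  norm_num [Nat.factorial]
  linear_combination ((-1:ℝ)^i * c^(i+r+1)) * hcomb

lemma clt_Gzero (c : ℝ) (N : ℕ) :
    cltG (cltF c) (N+1) (cltW 0) = if N+1 = 2 then c else 0 := by
  rw [cltG, cltW_succ]
  have hterm : ∀ k ∈ range (N+1),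
      (N.choose k : ℝ) * cltF c (k+1) * cltG (cltF c) (N - k) (cltW (0+1))
      = (N.choose k : ℝ) * cltF c (k+1) * cltP c (N-k) 1 := by
    intro k hk
    rw [clt_Gstar c (N-k) (0+1) (by omega)]
  rw [Finset.sum_congr rfl hterm]
  rcases Nat.even_or_odd (N+1) with he | ho
  · obtain ⟨m, hm⟩ : ∃ m, N + 1 = 2*m := by
      rcases he with ⟨t, ht⟩; exact ⟨t, by omega⟩
    have hm1 : 1 ≤ m := by omega
    rw [show range (N+1) = range (2*m) by rw [hm]]
    rw [clt_sum_range_even_odd]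
    rw [Finset.sum_eq_zero (fun i _ => by rw [cltF_odd]; ring : ∀ i ∈ range m,
      (N.choose (2*i) : ℝ) * cltF c (2*i+1) * cltP c (N-(2*i)) 1 = 0), zero_add]
    have hodd : ∀ i ∈ range m,
        (N.choose (2*i+1) : ℝ) * cltF c (2*i+1+1) * cltP c (N-(2*i+1)) 1
        = ((N‼ : ℝ) * c^m) * (((m-1).choose i : ℝ) * (-1)^i * (1:ℝ)^(m-1-i)) := by
      intro i hi
      have him : i < m := Finset.mem_range.1 hi
      have hN : N = 2*i+2*(m-1-i)+1 := by omega
      have hNr : N - (2*i+1) = 2*(m-1-i) := by omega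
      rw [hNr, show 2*i+1+1 = 2*i+2 by omega]
      conv_lhs => rw [hN]
      rw [clt_term_eval0 c i (m-1-i)]
      rw [show i+(m-1-i)+1 = m by omega, show i+(m-1-i) = m-1 by omega,
        show 2*i+2*(m-1-i)+1 = N by omega]
    rw [Finset.sum_congr rfl hodd, ← Finset.mul_sum]
    have hbin : ∑ i ∈ range m, (((m-1).choose i : ℝ) * (-1)^i * (1:ℝ)^(m-1-i))
        = (0:ℝ)^(m-1) := by
      have hb := clt_binom_sum (1:ℝ) (m-1)
      rw [show m - 1 + 1 = m by omega] at hb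
      rw [hb]
      norm_num
    rw [hbin]
    rcases Nat.eq_or_lt_of_le hm1 with h1 | h2
    · rw [show N + 1 = 2 by omega, if_pos rfl, ← h1]
      norm_num [Nat.doubleFactorial, show N = 1 by omega]
    · rw [if_neg (by omega), show m - 1 = (m-2)+1 by omega]
      rw [zero_pow (by omega : (m-2)+1 ≠ 0)]
      ring
  · rw [if_neg (by rcases ho with ⟨t,ht⟩; omega)]
    have hNe : Even N := by rcases ho with ⟨t, ht⟩; exact ⟨t, by omega⟩
    refine Finset.sum_eq_zero (fun k hk => ?_)
    rcases Nat.even_or_odd k with hke | hko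
    · have : ¬ Even (k+1) := by rwa [Nat.even_add_one, not_not]
      rw [cltF, if_neg this]; ring
    · have hkN : k ≤ N := by have := Finset.mem_range.1 hk; omega
      have : ¬ Even (N - k) := by
        rw [Nat.even_sub hkN]
        intro hiff
        exact (Nat.not_even_iff_odd.2 hko) (hiff.1 hNe)
      rw [cltP_odd c _ _ this]; ring

lemma clt_G_congr (f f' : ℕ → ℝ) :
    ∀ n, (∀ k, 1 ≤ k → k ≤ n → f k = f' k) → ∀ w, cltG f n w = cltG f' n w := by
  intro n
  induction n using Nat.strong_induction_on with
  | _ n IH =>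
  intro hf w
  match n with
  | 0 => rw [cltG, cltG]
  | (N+1) =>
    rw [cltG, cltG]
    refine Finset.sum_congr rfl (fun k hk => ?_)
    have hk' : k ≤ N := by have := Finset.mem_range.1 hk; omega
    rw [hf (k+1) (by omega) (by omega),
      IH (N-k) (by omega) (fun j h1 h2 => hf j h1 (by omega)) _]

lemma clt_G_top (f f' : ℕ → ℝ) (n : ℕ) (h : ∀ k, 1 ≤ k → k ≤ n → f k = f' k) (w : ℕ → ℝ) :
    cltG f (n+1) w - cltG f' (n+1) w = (f (n+1) - f' (n+1)) * w 1 := by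
  rw [cltG, cltG, Finset.sum_range_succ, Finset.sum_range_succ]
  have hsum : ∀ k ∈ range n,
      (n.choose k : ℝ) * f (k+1) * cltG f (n - k) (fun j => w (j+1))
      = (n.choose k : ℝ) * f' (k+1) * cltG f' (n - k) (fun j => w (j+1)) := by
    intro k hk
    have hk' : k < n := Finset.mem_range.1 hk
    rw [h (k+1) (by omega) (by omega),
      clt_G_congr f f' (n-k) (fun j h1 h2 => h j h1 (by omega)) _]
  rw [Finset.sum_congr rfl hsum]
  have h0 : ∀ g : ℕ → ℝ, cltG g (n - n) (fun j => w (j+1)) = w 1 := by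
    intro g
    rw [Nat.sub_self, cltG]
  rw [h0, h0, Nat.choose_self]
  push_cast
  ring

end CLTAux




section CLTBridge

open Nat

/-- Per-block weight `f_a(m) = m! a_m / (d)_m`. -/
noncomputable def cltFA (d : ℕ) (a : ℕ → ℝ) (m : ℕ) : ℝ :=
  (Nat.factorial m : ℝ) * a m / (Nat.descFactorial d m : ℝ)

lemma clt_finCumulant_eq (d : ℕ) (a : ℕ → ℝ) (k : ℕ) :
    finCumulant d a k
    = (-(d:ℝ))^k / ((d:ℝ) * (Nat.factorial (k-1) : ℝ)) * cltG (cltFA d a) k (cltW 0) := by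
  rw [finCumulant]
  congr 1
  rw [← clt_sum_finpartition_eq (cltFA d a) k (Finset.univ : Finset (Fin k)) (by simp) (cltW 0)]
  refine Finset.sum_congr rfl (fun π _ => ?_)
  have h1 : ∏ V ∈ π.parts, cltFA d a V.card
      = ((∏ V ∈ π.parts, (Nat.factorial V.card : ℝ)) * (∏ V ∈ π.parts, a V.card)) /
        (∏ V ∈ π.parts, (Nat.descFactorial d V.card : ℝ)) := by
    rw [← Finset.prod_mul_distrib, ← Finset.prod_div_distrib]
    rfl
  rw [h1]
  show _ = cltW 0 π.parts.card * _
  simp only [cltW, Nat.add_zero]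
  ring

/-- The coefficient sequence of the limiting polynomial. -/
noncomputable def cltB (d : ℕ) (n : ℕ) : ℝ :=
  if Even n then
    (-1)^(n/2) * (Nat.descFactorial d n : ℝ) /
      ((d:ℝ)^(n/2) * 2^(n/2) * (Nat.factorial (n/2) : ℝ))
  else 0

lemma cltB_even (d i : ℕ) :
    cltB d (2*i) = (-1)^i * (Nat.descFactorial d (2*i) : ℝ) /
      ((d:ℝ)^i * 2^i * (Nat.factorial i : ℝ)) := by
  rw [cltB, if_pos ⟨i, by omega⟩, Nat.mul_div_cancel_left _ (by norm_num : 0 < 2)]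

lemma cltB_odd (d n : ℕ) (h : ¬ Even n) : cltB d n = 0 := by
  rw [cltB, if_neg h]

lemma cltFA_cltB (d k : ℕ) (hd : d ≠ 0) (hkd : k ≤ d) :
    cltFA d (cltB d) k = cltF (1/(d:ℝ)) k := by
  rcases Nat.even_or_odd k with ⟨i, hi⟩ | hodd
  · have hk2 : k = 2*i := by omega
    subst hk2
    rw [cltFA, cltB_even, cltF, if_pos ⟨i, by omega⟩,
      Nat.mul_div_cancel_left _ (by norm_num : 0 < 2)]
    have hD : (Nat.descFactorial d (2*i) : ℝ) ≠ 0 := by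
      rw [Nat.cast_ne_zero]
      intro h0
      rw [Nat.descFactorial_eq_zero_iff_lt] at h0
      omega
    have hfac : ((Nat.factorial (2*i)) : ℝ) = 2^i * (Nat.factorial i : ℝ) * ((2*i-1)‼ : ℝ) := by
      have h1 := clt_fact_eq_dd (2*i)
      have h2 := Nat.doubleFactorial_two_mul i
      rw [h2] at h1
      push_cast [h1]
      ring
    have hdR : (d:ℝ) ≠ 0 := Nat.cast_ne_zero.2 hd
    rw [hfac]
    have hiF : (Nat.factorial i : ℝ) ≠ 0 := Nat.cast_ne_zero.2 (Nat.factorial_ne_zero i)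
    field_simp
    ring_nf
    rw [← mul_pow, mul_inv_cancel₀ hdR, one_pow]
  · rw [cltFA, cltB_odd d k (Nat.not_even_iff_odd.2 hodd), cltF,
      if_neg (Nat.not_even_iff_odd.2 hodd)]
    simp

lemma clt_kappa_cltB (d n : ℕ) (hd : d ≠ 0) (h1 : 1 ≤ n) (hnd : n ≤ d) :
    finCumulant d (cltB d) n = if n = 2 then 1 else 0 := by
  rw [clt_finCumulant_eq]
  obtain ⟨N, rfl⟩ : ∃ N, n = N+1 := ⟨n-1, by omega⟩
  rw [clt_G_congr (cltFA d (cltB d)) (cltF (1/(d:ℝ))) (N+1)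
    (fun k hk1 hk2 => cltFA_cltB d k hd (by omega)) (cltW 0), clt_Gzero]
  by_cases h2 : N+1 = 2
  · rw [if_pos h2, if_pos h2, h2]
    have hdR : (d:ℝ) ≠ 0 := Nat.cast_ne_zero.2 hd
    norm_num [Nat.factorial]
    field_simp
  · rw [if_neg h2, if_neg h2, mul_zero]

end CLTBridge

/-- **Central limit polynomial** (Example 6.1): the monic polynomial `p` of degree `d`
whose `d`-finite free cumulants satisfy `κ_2(p) = 1` and `κ_n(p) = 0` for `n ≠ 2`,
`1 ≤ n ≤ d`, has coefficients `a_n = 0` for odd `n` and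
`a_{2i} = (−1)^i (d)_{2i}/(d^i 2^i i!)`; i.e. `p(x) = d^{−d/2} H_d(√d x)`. -/
theorem central_limit_polynomial (d : ℕ) (p : Polynomial ℝ)
    (hmonic : p.Monic) (hdeg : p.natDegree = d)
    (hk2 : finCumulant d (coeffA d p) 2 = 1)
    (hk : ∀ n : ℕ, 1 ≤ n → n ≤ d → n ≠ 2 → finCumulant d (coeffA d p) n = 0) :
    (∀ n : ℕ, n ≤ d → Odd n → coeffA d p n = 0) ∧
      (∀ i : ℕ, 2 * i ≤ d →
        coeffA d p (2 * i) =
          (-1 : ℝ) ^ i * (Nat.descFactorial d (2 * i) : ℝ) /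
            ((d : ℝ) ^ i * 2 ^ i * (Nat.factorial i : ℝ))) ∧
      p = hermiteScaled d := by
  set a := coeffA d p with ha_def
  have hd : d ≠ 0 := by
    intro h
    subst h
    rw [finCumulant] at hk2
    norm_num at hk2
  have hdR : (d:ℝ) ≠ 0 := Nat.cast_ne_zero.2 hd
  have hpref : ∀ n : ℕ, (-(d:ℝ))^n / ((d:ℝ) * ((Nat.factorial (n-1)) : ℝ)) ≠ 0 := by
    intro n
    apply div_ne_zero
    · exact pow_ne_zero _ (neg_ne_zero.2 hdR)
    · exact mul_ne_zero hdR (Nat.cast_ne_zero.2 (Nat.factorial_ne_zero _))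
  have ha0 : a 0 = 1 := by
    rw [ha_def, coeffA, if_pos (Nat.zero_le d)]
    simpa [Nat.sub_zero] using (hdeg ▸ hmonic.coeff_natDegree)
  have hb0 : cltB d 0 = 1 := by norm_num [cltB]
  have hab : ∀ n, n ≤ d → a n = cltB d n := by
    intro n
    induction n using Nat.strong_induction_on with
    | _ n IH =>
    intro hnd
    match n, hnd with
    | 0, hnd => rw [ha0, hb0]
    | (N+1), hnd =>
      have hka : finCumulant d a (N+1) = if N+1 = 2 then 1 else 0 := by
        by_cases h2 : N+1 = 2
        · rw [if_pos h2, h2]; exact hk2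
        · rw [if_neg h2]; exact hk (N+1) (by omega) hnd h2
      have hkb := clt_kappa_cltB d (N+1) hd (by omega) hnd
      have heq : cltG (cltFA d a) (N+1) (cltW 0) = cltG (cltFA d (cltB d)) (N+1) (cltW 0) := by
        have h3 := hka.trans hkb.symm
        rw [clt_finCumulant_eq, clt_finCumulant_eq] at h3
        exact mul_left_cancel₀ (hpref (N+1)) h3
      have hdiff := clt_G_top (cltFA d a) (cltFA d (cltB d)) N
        (fun k hk1 hk2 => by rw [cltFA, cltFA, IH k (by omega) (by omega)]) (cltW 0)
      rw [heq, sub_self] at hdiff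
      have hW1 : cltW 0 1 = -1 := by norm_num [cltW, Nat.factorial]
      rw [hW1] at hdiff
      have hfa : cltFA d a (N+1) = cltFA d (cltB d) (N+1) := by
        have h4 : cltFA d a (N+1) - cltFA d (cltB d) (N+1) = 0 := by
          by_contra h5
          exact (mul_ne_zero h5 (by norm_num : (-1:ℝ) ≠ 0)) hdiff.symm
        linarith [h4]
      rw [cltFA, cltFA] at hfa
      have hD : (Nat.descFactorial d (N+1) : ℝ) ≠ 0 := by
        rw [Nat.cast_ne_zero]
        intro h0
        rw [Nat.descFactorial_eq_zero_iff_lt] at h0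
        omega
      have hF : ((Nat.factorial (N+1)) : ℝ) ≠ 0 := Nat.cast_ne_zero.2 (Nat.factorial_ne_zero _)
      rw [div_eq_div_iff hD hD] at hfa
      exact mul_left_cancel₀ hF (mul_right_cancel₀ hD hfa)
  refine ⟨?_, ?_, ?_⟩
  · intro n hn hodd
    rw [hab n hn, cltB, if_neg (Nat.not_even_iff_odd.2 hodd)]
  · intro i hi
    rw [hab (2*i) hi, cltB_even]
  · -- p = hermiteScaled d
    have hpc : ∀ k, k ≤ d → p.coeff k = (-1)^(d-k) * cltB d (d-k) := by
      intro k hkle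
      have h1 : a (d-k) = (-1:ℝ)^(d-k) * p.coeff k := by
        rw [ha_def, coeffA, if_pos (by omega : d - k ≤ d), show d-(d-k) = k by omega]
      have h2 := hab (d-k) (by omega)
      rw [h1] at h2
      rw [← h2, ← mul_assoc, ← pow_add, Even.neg_one_pow ⟨d-k, rfl⟩, one_mul]
    have hphigh : ∀ k, d < k → p.coeff k = 0 := fun k hkgt =>
      Polynomial.coeff_eq_zero_of_natDegree_lt (by rw [hdeg]; exact hkgt)
    have hdpos : (0:ℝ) < d := Nat.cast_pos.2 (Nat.pos_of_ne_zero hd)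
    have hHS : hermiteScaled d = ∑ i ∈ Finset.range (d/2+1),
        Polynomial.C ((d:ℝ)^(-(d:ℝ)/2) * ((Nat.factorial d : ℝ) * (-1)^i /
          ((Nat.factorial i : ℝ) * (Nat.factorial (d-2*i) : ℝ) * 2^i)) * (Real.sqrt d)^(d-2*i)) *
          Polynomial.X^(d-2*i) := by
      rw [hermiteScaled, hermitePoly, Polynomial.comp, Polynomial.eval₂_finset_sum,
        Finset.mul_sum]
      refine Finset.sum_congr rfl (fun i hi => ?_)
      rw [Polynomial.eval₂_mul, Polynomial.eval₂_C, Polynomial.eval₂_X_pow, mul_pow,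
        ← Polynomial.C_pow]
      simp only [← mul_assoc, ← Polynomial.C_mul]
    have hcoef : ∀ i, 2*i ≤ d → (d:ℝ)^(-(d:ℝ)/2) * ((Nat.factorial d : ℝ) * (-1)^i /
          ((Nat.factorial i : ℝ) * (Nat.factorial (d-2*i) : ℝ) * 2^i)) * (Real.sqrt d)^(d-2*i)
        = cltB d (2*i) := by
      intro i hi
      have hsq : (Real.sqrt d)^(d-2*i) = (d:ℝ)^((((d:ℝ) - 2*i)/2 : ℝ)) := by
        rw [Real.sqrt_eq_rpow, ← Real.rpow_natCast ((d:ℝ)^((1:ℝ)/(2:ℝ))) (d-2*i),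
          ← Real.rpow_mul (le_of_lt hdpos)]
        congr 1
        rw [Nat.cast_sub hi]
        push_cast
        ring
      have hrp : (d:ℝ)^(-(d:ℝ)/2) * (d:ℝ)^((((d:ℝ) - 2*i)/2 : ℝ)) = ((d:ℝ)^(i:ℕ))⁻¹ := by
        rw [← Real.rpow_add hdpos, show -(d:ℝ)/2 + ((d:ℝ) - 2*i)/2 = -(i:ℝ) by ring,
          Real.rpow_neg (le_of_lt hdpos), Real.rpow_natCast]
      have hfacd : ((Nat.factorial (d-2*i)) : ℝ) * ((Nat.descFactorial d (2*i)) : ℝ)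
          = (Nat.factorial d : ℝ) := by
        exact_mod_cast congrArg (fun x : ℕ => (x:ℝ)) (Nat.factorial_mul_descFactorial hi)
      rw [hsq, show (d:ℝ)^(-(d:ℝ)/2) * ((Nat.factorial d : ℝ) * (-1)^i /
          ((Nat.factorial i : ℝ) * (Nat.factorial (d-2*i) : ℝ) * 2^i)) *
          (d:ℝ)^((((d:ℝ) - 2*i)/2 : ℝ))
        = ((d:ℝ)^(-(d:ℝ)/2) * (d:ℝ)^((((d:ℝ) - 2*i)/2 : ℝ))) * ((Nat.factorial d : ℝ) * (-1)^i /
          ((Nat.factorial i : ℝ) * (Nat.factorial (d-2*i) : ℝ) * 2^i)) from by ring, hrp,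
        cltB_even]
      have hne1 : (Nat.factorial i : ℝ) ≠ 0 := Nat.cast_ne_zero.2 (Nat.factorial_ne_zero _)
      have hne2 : (Nat.factorial (d-2*i) : ℝ) ≠ 0 := Nat.cast_ne_zero.2 (Nat.factorial_ne_zero _)
      have hdpow : ((d:ℝ)^(i:ℕ)) ≠ 0 := pow_ne_zero _ hdR
      rw [← hfacd]
      field_simp
    apply Polynomial.ext
    intro k
    rw [hHS, Polynomial.finset_sum_coeff]
    simp only [Polynomial.coeff_C_mul, Polynomial.coeff_X_pow]
    by_cases hkd : k ≤ d
    · by_cases hpar : Even (d - k)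
      · obtain ⟨i0, hi0⟩ : ∃ i0, d - k = 2*i0 := by
          rcases hpar with ⟨t, ht⟩; exact ⟨t, by omega⟩
        rw [Finset.sum_eq_single i0
          (fun i hi hne => by
            rw [if_neg (fun hki => hne (by
              have := Finset.mem_range.1 hi
              omega)), mul_zero])
          (fun hni => absurd (Finset.mem_range.2 (by omega)) hni)]
        rw [if_pos (by omega : k = d - 2*i0), mul_one, hpc k hkd, hi0,
          hcoef i0 (by omega), Even.neg_one_pow ⟨i0, by omega⟩, one_mul]
      · rw [hpc k hkd, cltB_odd d (d-k) hpar, mul_zero]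
        symm
        refine Finset.sum_eq_zero (fun i hi => ?_)
        rw [if_neg (fun hki => hpar ⟨i, by
          have := Finset.mem_range.1 hi
          omega⟩), mul_zero]
    · rw [hphigh k (by omega)]
      symm
      refine Finset.sum_eq_zero (fun i hi => ?_)
      rw [if_neg (by
        have := Finset.mem_range.1 hi
        intro hki
        omega), mul_zero]
end

section
/- Let λ be a real number and let p(x) = Σ_{i=0}^d x^{d−i}(−1)^i a^p_i be the monic polynomial of degree d whose d-finite free cumulants satisfy κ_n(p) = λ for all n = 1, ..., d. Then for every n with 1 ≤ n ≤ d, a^p_n = (d)_n (dλ)_n / (d^n n!), where (x)_n = x(x−1)···(x−n+1) denotes the falling factorial. -/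
open Finset Polynomial
open scoped Classical

set_option linter.unusedSectionVars false

section Emb
variable {α β γ : Type*}

private lemma cast_emb {f : α → β} (g : ∀ b : β, ({i : α // f i = b} ↪ γ)) {i : α} {b : β}
    (h : f i = b) : g b ⟨i, h⟩ = g (f i) ⟨i, rfl⟩ := by subst h; rfl

noncomputable def embProdEquiv : (α ↪ β × γ) ≃ Σ f : α → β, ∀ b : β, ({i : α // f i = b} ↪ γ) where
  toFun h := ⟨fun i => (h i).1, fun b =>
    ⟨fun x => (h x.1).2, by
      rintro ⟨i, hi⟩ ⟨j, hj⟩ hij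
      have : h i = h j := Prod.ext (hi.trans hj.symm) hij
      exact Subtype.ext (h.injective this)⟩⟩
  invFun fg := ⟨fun i => (fg.1 i, fg.2 (fg.1 i) ⟨i, rfl⟩), by
    intro i j hij
    have h1 : fg.1 i = fg.1 j := congrArg Prod.fst hij
    have h2 : fg.2 (fg.1 j) ⟨i, h1⟩ = fg.2 (fg.1 j) ⟨j, rfl⟩ := by
      rw [cast_emb fg.2 h1]
      exact congrArg Prod.snd hij
    exact Subtype.ext_iff.mp ((fg.2 (fg.1 j)).injective h2)⟩
  left_inv h := by ext i <;> rfl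
  right_inv := by
    rintro ⟨f, g⟩
    have : (fun (b : β) => (⟨fun x : {i : α // f i = b} => g (f x.1) ⟨x.1, rfl⟩, by
        rintro ⟨i, hi⟩ ⟨j, hj⟩ hij
        have : g b ⟨i, hi⟩ = g b ⟨j, hj⟩ := by rw [cast_emb g hi, cast_emb g hj]; exact hij
        exact Subtype.ext (Subtype.ext_iff.mp ((g b).injective this))⟩
      : {i : α // f i = b} ↪ γ)) = g := by
      funext b; ext ⟨i, hi⟩; exact (cast_emb g hi).symm
    exact Sigma.ext rfl (heq_of_eq this)
end Emb

lemma sum_prod_descFactorial_fiber (α β : Type*) [Fintype α] [DecidableEq α] [Fintype β] [DecidableEq β] (c : ℕ) :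
    ∑ f : α → β, ∏ b : β, c.descFactorial (univ.filter (fun i => f i = b)).card
      = (Fintype.card β * c).descFactorial (Fintype.card α) := by
  classical
  have e := Fintype.card_congr (embProdEquiv (α := α) (β := β) (γ := Fin c))
  rw [Fintype.card_embedding_eq, Fintype.card_prod, Fintype.card_fin] at e
  rw [e, Fintype.card_sigma]
  refine Finset.sum_congr rfl fun f _ => ?_
  rw [Fintype.card_pi]
  refine Finset.prod_congr rfl fun b _ => ?_
  rw [Fintype.card_embedding_eq, Fintype.card_fin, Fintype.card_subtype]

section Ker
variable {α β : Type*} [Fintype α] [DecidableEq α] [DecidableEq β]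

lemma Finpartition.eq_of_part_eq {s : Finset α} {P Q : Finpartition s}
    (h : ∀ a ∈ s, P.part a = Q.part a) : P = Q := by
  ext t
  constructor
  · intro ht
    obtain ⟨a, ha⟩ := P.nonempty_of_mem_parts ht
    have has : a ∈ s := P.le ht ha
    rw [← P.part_eq_of_mem ht ha, h a has]
    exact Q.part_mem.mpr has
  · intro ht
    obtain ⟨a, ha⟩ := Q.nonempty_of_mem_parts ht
    have has : a ∈ s := Q.le ht ha
    rw [← Q.part_eq_of_mem ht ha, ← h a has]
    exact P.part_mem.mpr has

/-- The kernel partition of a function. -/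
noncomputable def kerf (f : α → β) : Finpartition (univ : Finset α) :=
  Finpartition.ofSetoid (Setoid.ker f)

lemma mem_part_kerf (f : α → β) (a b : α) : b ∈ (kerf f).part a ↔ f a = f b := by
  rw [kerf, Finpartition.mem_part_ofSetoid_iff_rel, Setoid.ker_def]

lemma part_kerf (f : α → β) (a : α) :
    (kerf f).part a = univ.filter (fun i => f i = f a) := by
  ext b; rw [mem_part_kerf, mem_filter]; simp [eq_comm]

lemma parts_kerf (f : α → β) :
    (kerf f).parts = (univ.image f).image (fun b => univ.filter (fun i => f i = b)) := by
  ext t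
  constructor
  · intro ht
    obtain ⟨a, ha⟩ := (kerf f).nonempty_of_mem_parts ht
    rw [← (kerf f).part_eq_of_mem ht ha, part_kerf]
    exact mem_image_of_mem _ (mem_image_of_mem f (mem_univ a))
  · intro ht
    obtain ⟨b, hb, rfl⟩ := mem_image.mp ht
    obtain ⟨a, _, rfl⟩ := mem_image.mp hb
    rw [← part_kerf]
    exact (kerf f).part_mem.mpr (mem_univ a)

variable [Fintype β]

lemma prod_fiber_eq_prod_parts {M : Type*} [CommMonoid M] (f : α → β) (u : ℕ → M)
    (hu : u 0 = 1) :
    ∏ b : β, u (univ.filter (fun i => f i = b)).card = ∏ V ∈ (kerf f).parts, u V.card := by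
  rw [parts_kerf, Finset.prod_image]
  · symm
    apply Finset.prod_subset (subset_univ _)
    intro b _ hb
    have : univ.filter (fun i => f i = b) = ∅ := by
      rw [Finset.filter_eq_empty_iff]
      intro i _
      exact fun hfi => hb (hfi ▸ mem_image_of_mem f (mem_univ i))
    rw [this, Finset.card_empty, hu]
  · intro b hb b' hb' hbb'
    obtain ⟨a, _, rfl⟩ := mem_image.mp hb
    have : a ∈ univ.filter (fun i => f i = f a) := by simp
    rw [show univ.filter (fun i => f i = f a) = univ.filter (fun i => f i = b') from hbb'] at this
    exact (mem_filter.mp this).2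

/-- representative of a part -/
noncomputable def prep (π : Finpartition (univ : Finset α)) (V : π.parts) : α :=
  (π.nonempty_of_mem_parts V.2).choose

lemma prep_mem (π : Finpartition (univ : Finset α)) (V : π.parts) : prep π V ∈ (V : Finset α) :=
  (π.nonempty_of_mem_parts V.2).choose_spec

noncomputable def kerfFiberEquiv (π : Finpartition (univ : Finset α)) :
    {f : α → β // kerf f = π} ≃ ((π.parts : Finset (Finset α)) ↪ β) where
  toFun fh := ⟨fun V => fh.1 (prep π V), by
    rintro V W (h : fh.1 (prep π V) = fh.1 (prep π W))
    have h1 : prep π W ∈ (kerf fh.1).part (prep π V) := (mem_part_kerf _ _ _).mpr h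
    rw [fh.2, π.part_eq_of_mem V.2 (prep_mem π V)] at h1
    exact Subtype.ext (π.eq_of_mem_parts V.2 W.2 h1 (prep_mem π W))⟩
  invFun g := ⟨fun i => g ⟨π.part i, π.part_mem.mpr (mem_univ i)⟩, by
    apply Finpartition.eq_of_part_eq
    intro a _
    ext b
    rw [mem_part_kerf]
    constructor
    · intro h
      have h2 : π.part a = π.part b := Subtype.ext_iff.mp (g.injective h)
      have := π.mem_part (mem_univ b)
      rwa [← h2] at this
    · intro hb
      have h2 : π.part b = π.part a := π.part_eq_of_mem (π.part_mem.mpr (mem_univ a)) hb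
      exact congrArg g (Subtype.ext h2.symm)⟩
  left_inv := by
    rintro ⟨f, hf⟩
    apply Subtype.ext
    funext i
    have h1 : prep π ⟨π.part i, π.part_mem.mpr (mem_univ i)⟩ ∈ π.part i :=
      prep_mem π ⟨π.part i, π.part_mem.mpr (mem_univ i)⟩
    have h2 : prep π ⟨π.part i, π.part_mem.mpr (mem_univ i)⟩ ∈ (kerf f).part i := by
      rw [hf]; exact h1
    exact ((mem_part_kerf f i _).mp h2).symm
  right_inv := by
    intro g
    ext V
    have h1 : π.part (prep π V) = V := π.part_eq_of_mem V.2 (prep_mem π V)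
    exact congrArg g (Subtype.ext h1)

lemma card_kerf_fiber (π : Finpartition (univ : Finset α)) :
    (univ.filter (fun f : α → β => kerf f = π)).card
      = (Fintype.card β).descFactorial π.parts.card := by
  classical
  rw [← Fintype.card_subtype]
  rw [Fintype.card_congr (kerfFiberEquiv π), Fintype.card_embedding_eq, Fintype.card_coe]

lemma sum_kerf_group (F : Finpartition (univ : Finset α) → ℕ) :
    ∑ f : α → β, F (kerf f)
      = ∑ π : Finpartition (univ : Finset α),
          (Fintype.card β).descFactorial π.parts.card * F π := by
  classical
  rw [← Finset.sum_fiberwise_of_maps_to (g := fun f : α → β => kerf f)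
    (fun f _ => mem_univ _)]
  refine Finset.sum_congr rfl fun π _ => ?_
  rw [← card_kerf_fiber (β := β) π, Finset.sum_congr rfl fun f hf => ?_, Finset.sum_const,
    smul_eq_mul]
  rw [(mem_filter.mp hf).2]

end Ker

lemma nat_partition_identity (n m c : ℕ) :
    ∑ π : Finpartition (univ : Finset (Fin n)),
        m.descFactorial π.parts.card * ∏ V ∈ π.parts, c.descFactorial V.card
      = (m * c).descFactorial n := by
  have h1 := sum_prod_descFactorial_fiber (Fin n) (Fin m) c
  rw [Fintype.card_fin, Fintype.card_fin] at h1
  rw [← h1]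
  have h2 : ∀ f : Fin n → Fin m,
      (∏ b : Fin m, c.descFactorial (univ.filter (fun i => f i = b)).card)
        = ∏ V ∈ (kerf f).parts, c.descFactorial V.card :=
    fun f => prod_fiber_eq_prod_parts f (fun k => c.descFactorial k) (Nat.descFactorial_zero c)
  calc ∑ π : Finpartition (univ : Finset (Fin n)),
        m.descFactorial π.parts.card * ∏ V ∈ π.parts, c.descFactorial V.card
      = ∑ f : Fin n → Fin m, ∏ V ∈ (kerf f).parts, c.descFactorial V.card := by
        rw [sum_kerf_group (fun π => ∏ V ∈ π.parts, c.descFactorial V.card)]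
        simp [Fintype.card_fin]
    _ = _ := by
        refine Finset.sum_congr rfl fun f _ => ?_
        rw [h2 f]


section Poly

lemma descPochhammer_eval_neg_one' (k : ℕ) :
    (descPochhammer ℝ k).eval (-1) = (-1 : ℝ) ^ k * (Nat.factorial k : ℝ) := by
  induction k with
  | zero => simp
  | succ k ih =>
    rw [descPochhammer_succ_right, eval_mul, ih, eval_sub, eval_X, eval_natCast]
    push_cast [Nat.factorial_succ]
    ring

lemma descPochhammer_coeff_one (k : ℕ) (hk : 1 ≤ k) :
    (descPochhammer ℝ k).coeff 1 = (-1 : ℝ) ^ (k - 1) * (Nat.factorial (k - 1) : ℝ) := by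
  obtain ⟨j, rfl⟩ : ∃ j, k = j + 1 := ⟨k - 1, by omega⟩
  rw [descPochhammer_succ_left, coeff_X_mul, coeff_zero_eq_eval_zero, eval_comp]
  simp only [eval_sub, eval_X, eval_one, zero_sub]
  rw [descPochhammer_eval_neg_one']
  simp

lemma coeff_comp_C_mul_X (p : Polynomial ℝ) (x : ℝ) (k : ℕ) :
    (p.comp (C x * X)).coeff k = p.coeff k * x ^ k := by
  induction p using Polynomial.induction_on' with
  | add p q hp hq => simp [add_comp, hp, hq, add_mul]
  | monomial n a =>
    rw [monomial_comp, mul_pow, ← C_pow, ← mul_assoc, ← C_mul, coeff_C_mul, coeff_X_pow,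
      coeff_monomial]
    by_cases h : n = k
    · subst h; simp [mul_comm]
    · simp [h, Ne.symm h]

end Poly

lemma id_real_x (n m : ℕ) (x : ℝ) :
    ∑ π : SetPartition n,
        (m.descFactorial π.parts.card : ℝ) * ∏ V ∈ π.parts, (descPochhammer ℝ V.card).eval x
      = (descPochhammer ℝ n).eval ((m : ℝ) * x) := by
  set P : Polynomial ℝ := ∑ π : SetPartition n,
    C (m.descFactorial π.parts.card : ℝ) * ∏ V ∈ π.parts, descPochhammer ℝ V.card with hP
  set Q : Polynomial ℝ := (descPochhammer ℝ n).comp (C (m : ℝ) * X) with hQ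
  have heval : ∀ y : ℝ, P.eval y = ∑ π : SetPartition n,
      (m.descFactorial π.parts.card : ℝ) * ∏ V ∈ π.parts, (descPochhammer ℝ V.card).eval y := by
    intro y
    rw [hP, eval_finset_sum]
    refine Finset.sum_congr rfl fun π _ => ?_
    rw [eval_mul, eval_C, eval_prod]
  have hQeval : ∀ y : ℝ, Q.eval y = (descPochhammer ℝ n).eval ((m : ℝ) * y) := by
    intro y
    rw [hQ, eval_comp, eval_mul, eval_C, eval_X]
  have hnat : ∀ c : ℕ, P.eval (c : ℝ) = Q.eval (c : ℝ) := by
    intro c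
    rw [heval, hQeval]
    have := nat_partition_identity n m c
    calc ∑ π : SetPartition n,
          (m.descFactorial π.parts.card : ℝ) * ∏ V ∈ π.parts, (descPochhammer ℝ V.card).eval (c:ℝ)
        = ((∑ π : Finpartition (univ : Finset (Fin n)),
            m.descFactorial π.parts.card * ∏ V ∈ π.parts, c.descFactorial V.card : ℕ) : ℝ) := by
          push_cast
          refine Finset.sum_congr rfl fun π _ => ?_
          congr 1
          refine Finset.prod_congr rfl fun V _ => ?_
          rw [descPochhammer_eval_eq_descFactorial]
      _ = (((m * c).descFactorial n : ℕ) : ℝ) := by rw [this]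
      _ = (descPochhammer ℝ n).eval ((m : ℝ) * (c : ℝ)) := by
          rw [← Nat.cast_mul, descPochhammer_eval_eq_descFactorial]
  have hPQ : P = Q := by
    by_contra hne
    have h0 : P - Q ≠ 0 := sub_ne_zero.mpr hne
    have : {y : ℝ | (P - Q).IsRoot y}.Infinite := by
      apply Set.Infinite.mono (s := Set.range ((↑) : ℕ → ℝ))
      · rintro y ⟨c, rfl⟩
        simp only [Set.mem_setOf_eq, IsRoot, eval_sub, hnat c, sub_self]
      · exact Set.infinite_range_of_injective Nat.cast_injective
    exact h0 (eq_zero_of_infinite_isRoot _ this)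
  rw [← heval, hPQ, hQeval]

lemma mobius_identity (n : ℕ) (hn : 1 ≤ n) (x : ℝ) :
    ∑ π : SetPartition n,
        (-1 : ℝ) ^ (π.parts.card - 1) * (Nat.factorial (π.parts.card - 1) : ℝ) *
          ∏ V ∈ π.parts, (descPochhammer ℝ V.card).eval x
      = (-1 : ℝ) ^ (n - 1) * (Nat.factorial (n - 1) : ℝ) * x := by
  have huniv : (Finset.univ : Finset (Fin n)).Nonempty := by
    haveI : NeZero n := ⟨by omega⟩
    exact univ_nonempty
  have hcard : ∀ π : SetPartition n, 1 ≤ π.parts.card := by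
    intro π
    rw [Nat.one_le_iff_ne_zero, ← Nat.pos_iff_ne_zero, Finset.card_pos]
    exact π.parts_nonempty (by simpa using huniv.ne_empty)
  set P : Polynomial ℝ := ∑ π : SetPartition n,
    C (∏ V ∈ π.parts, (descPochhammer ℝ V.card).eval x) * descPochhammer ℝ π.parts.card with hP
  set Q : Polynomial ℝ := (descPochhammer ℝ n).comp (C x * X) with hQ
  have hPQ : P = Q := by
    by_contra hne
    have h0 : P - Q ≠ 0 := sub_ne_zero.mpr hne
    have hnat : ∀ m : ℕ, P.eval (m : ℝ) = Q.eval (m : ℝ) := by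
      intro m
      rw [hP, hQ, eval_finset_sum, eval_comp, eval_mul, eval_C, eval_X]
      calc ∑ π : SetPartition n,
            (C (∏ V ∈ π.parts, (descPochhammer ℝ V.card).eval x) *
              descPochhammer ℝ π.parts.card).eval (m : ℝ)
          = ∑ π : SetPartition n,
            (m.descFactorial π.parts.card : ℝ) *
              ∏ V ∈ π.parts, (descPochhammer ℝ V.card).eval x := by
            refine Finset.sum_congr rfl fun π _ => ?_
            rw [eval_mul, eval_C, descPochhammer_eval_eq_descFactorial, mul_comm]
        _ = (descPochhammer ℝ n).eval ((m : ℝ) * x) := id_real_x n m x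
        _ = (descPochhammer ℝ n).eval (x * (m : ℝ)) := by rw [mul_comm]
    have : {y : ℝ | (P - Q).IsRoot y}.Infinite := by
      apply Set.Infinite.mono (s := Set.range ((↑) : ℕ → ℝ))
      · rintro y ⟨c, rfl⟩
        simp only [Set.mem_setOf_eq, IsRoot, eval_sub, hnat c, sub_self]
      · exact Set.infinite_range_of_injective Nat.cast_injective
    exact h0 (eq_zero_of_infinite_isRoot _ this)
  have hcoeff := congrArg (fun p : Polynomial ℝ => p.coeff 1) hPQ
  simp only [hP, hQ] at hcoeff
  rw [finset_sum_coeff, coeff_comp_C_mul_X, descPochhammer_coeff_one n hn, pow_one] at hcoeff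
  calc ∑ π : SetPartition n,
        (-1 : ℝ) ^ (π.parts.card - 1) * (Nat.factorial (π.parts.card - 1) : ℝ) *
          ∏ V ∈ π.parts, (descPochhammer ℝ V.card).eval x
      = ∑ π : SetPartition n,
        (C (∏ V ∈ π.parts, (descPochhammer ℝ V.card).eval x) *
          descPochhammer ℝ π.parts.card).coeff 1 := by
        refine Finset.sum_congr rfl fun π _ => ?_
        rw [coeff_C_mul, descPochhammer_coeff_one _ (hcard π)]
        ring
    _ = (-1 : ℝ) ^ (n - 1) * (Nat.factorial (n - 1) : ℝ) * x := by rw [hcoeff]; try ring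

section TopPart
variable {n : ℕ}

lemma parts_top_eq (hn : 1 ≤ n) : (⊤ : SetPartition n).parts = {Finset.univ} := by
  haveI : NeZero n := ⟨by omega⟩
  have h := Finpartition.parts_top_subset (Finset.univ : Finset (Fin n))
  rcases Finset.subset_singleton_iff.mp h with h0 | h1
  · exfalso
    have h2 := Finpartition.parts_eq_empty_iff.mp h0
    exact (univ_nonempty (α := Fin n)).ne_empty h2
  · exact h1

lemma eq_top_of_mem_card (π : SetPartition n) {V : Finset (Fin n)} (hV : V ∈ π.parts)
    (hc : V.card = n) : π = ⊤ := by
  have hn : 1 ≤ n := by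
    obtain ⟨a, _⟩ := π.nonempty_of_mem_parts hV
    have := Fintype.card_pos_iff.mpr ⟨a⟩
    simp only [Fintype.card_fin] at this; omega
  have hVuniv : V = Finset.univ := (Finset.card_eq_iff_eq_univ V).mp (by rw [hc, Fintype.card_fin])
  subst hVuniv
  ext t
  rw [parts_top_eq hn, Finset.mem_singleton]
  constructor
  · intro ht
    by_contra hne
    have hdisj : Disjoint t Finset.univ := π.disjoint ht hV hne
    obtain ⟨a, ha⟩ := π.nonempty_of_mem_parts ht
    exact Finset.disjoint_left.mp hdisj ha (mem_univ a)
  · rintro rfl; exact hV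

lemma card_lt_of_ne_top (π : SetPartition n) (hπ : π ≠ ⊤) {V : Finset (Fin n)}
    (hV : V ∈ π.parts) : V.card < n := by
  have h1 : V.card ≤ n := by
    have := Finset.card_le_univ V
    rwa [Fintype.card_fin] at this
  rcases lt_or_eq_of_le h1 with h | h
  · exact h
  · exact absurd (eq_top_of_mem_card π hV h) hπ

end TopPart

noncomputable def bseq (d : ℕ) (lam : ℝ) (k : ℕ) : ℝ :=
  (Nat.descFactorial d k : ℝ) * (descPochhammer ℝ k).eval ((d : ℝ) * lam) /
    ((d : ℝ) ^ k * (Nat.factorial k : ℝ))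

lemma finCumulant_bseq (d : ℕ) (lam : ℝ) (n : ℕ) (hn1 : 1 ≤ n) (hnd : n ≤ d) :
    finCumulant d (bseq d lam) n = lam := by
  have hd1 : 1 ≤ d := le_trans hn1 hnd
  have hd0 : (d : ℝ) ≠ 0 := Nat.cast_ne_zero.mpr (by omega)
  set x : ℝ := (d : ℝ) * lam with hx
  have hcardle : ∀ π : SetPartition n, ∀ V ∈ π.parts, V.card ≤ d := by
    intro π V hV
    have := Finset.card_le_univ V
    rw [Fintype.card_fin] at this
    omega
  have hcard1 : ∀ π : SetPartition n, 1 ≤ π.parts.card := by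
    intro π
    haveI : NeZero n := ⟨by omega⟩
    rw [Nat.one_le_iff_ne_zero, ← Nat.pos_iff_ne_zero, Finset.card_pos]
    exact π.parts_nonempty (by simpa using (univ_nonempty (α := Fin n)).ne_empty)
  have hterm : ∀ π : SetPartition n,
      ((-1 : ℝ) ^ π.parts.card * (∏ V ∈ π.parts, (Nat.factorial V.card : ℝ)) *
          (∏ V ∈ π.parts, bseq d lam V.card) * (Nat.factorial (π.parts.card - 1) : ℝ)) /
        (∏ V ∈ π.parts, (Nat.descFactorial d V.card : ℝ))
      = -(((-1 : ℝ) ^ (π.parts.card - 1) * (Nat.factorial (π.parts.card - 1) : ℝ) *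
          ∏ V ∈ π.parts, (descPochhammer ℝ V.card).eval x) / (d : ℝ) ^ n) := by
    intro π
    have hDno : ∀ V ∈ π.parts, (Nat.descFactorial d V.card : ℝ) ≠ 0 := by
      intro V hV
      rw [Nat.cast_ne_zero]
      intro h0
      exact absurd (Nat.descFactorial_eq_zero_iff_lt.mp h0) (by have := hcardle π V hV; omega)
    have hDprod : (∏ V ∈ π.parts, (Nat.descFactorial d V.card : ℝ)) ≠ 0 :=
      Finset.prod_ne_zero_iff.mpr hDno
    have hprod : (∏ V ∈ π.parts, (Nat.factorial V.card : ℝ)) *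
        (∏ V ∈ π.parts, bseq d lam V.card)
        = (∏ V ∈ π.parts, (Nat.descFactorial d V.card : ℝ)) *
          (∏ V ∈ π.parts, (descPochhammer ℝ V.card).eval x) / (d : ℝ) ^ n := by
      rw [← Finset.prod_mul_distrib]
      have h1 : ∀ V ∈ π.parts, (Nat.factorial V.card : ℝ) * bseq d lam V.card
          = (Nat.descFactorial d V.card : ℝ) * (descPochhammer ℝ V.card).eval x /
            (d : ℝ) ^ V.card := by
        intro V _
        rw [bseq, ← hx]
        have hf : (Nat.factorial V.card : ℝ) ≠ 0 := Nat.cast_ne_zero.mpr (Nat.factorial_ne_zero _)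
        have hp : ((d : ℝ) ^ V.card) ≠ 0 := pow_ne_zero _ hd0
        field_simp
      rw [Finset.prod_congr rfl h1, Finset.prod_div_distrib, Finset.prod_mul_distrib]
      congr 1
      rw [Finset.prod_pow_eq_pow_sum, π.sum_card_parts, Finset.card_univ, Fintype.card_fin]
    have hsign : (-1 : ℝ) ^ π.parts.card = -(-1 : ℝ) ^ (π.parts.card - 1) := by
      obtain ⟨j, hj⟩ : ∃ j, π.parts.card = j + 1 := ⟨π.parts.card - 1, by have := hcard1 π; omega⟩
      rw [hj]
      simp [pow_succ]
    rw [hsign]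
    have hpn : ((d : ℝ) ^ n) ≠ 0 := pow_ne_zero _ hd0
    field_simp at hprod ⊢
    linear_combination (-1 : ℝ) * hprod
  rw [finCumulant, Finset.sum_congr rfl (fun π _ => hterm π), Finset.sum_neg_distrib,
    ← Finset.sum_div, mobius_identity n hn1 x]
  have hfac : ((Nat.factorial (n - 1) : ℕ) : ℝ) ≠ 0 := Nat.cast_ne_zero.mpr (Nat.factorial_ne_zero _)
  have hpn : ((d : ℝ) ^ n) ≠ 0 := pow_ne_zero _ hd0
  have hsign2 : (-(d : ℝ)) ^ n = (-1 : ℝ) ^ n * (d : ℝ) ^ n := by rw [neg_pow]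
  have hodd : (-1 : ℝ) ^ n * (-1 : ℝ) ^ (n - 1) = -1 := by
    obtain ⟨j, rfl⟩ : ∃ j, n = j + 1 := ⟨n - 1, by omega⟩
    rw [Nat.add_sub_cancel, ← pow_add]
    exact Odd.neg_one_pow ⟨j, by ring⟩
  rw [hsign2, hx]
  field_simp
  linear_combination (-lam) * hodd

lemma cumulant_determines (d n : ℕ) (hn1 : 1 ≤ n) (hnd : n ≤ d) (a b : ℕ → ℝ)
    (hab : ∀ k, 1 ≤ k → k < n → a k = b k)
    (h : finCumulant d a n = finCumulant d b n) : a n = b n := by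
  have hd0 : (d : ℝ) ≠ 0 := Nat.cast_ne_zero.mpr (by omega)
  have hC : (-(d : ℝ)) ^ n / ((d : ℝ) * (Nat.factorial (n - 1) : ℝ)) ≠ 0 := by
    apply div_ne_zero
    · exact pow_ne_zero _ (neg_ne_zero.mpr hd0)
    · exact mul_ne_zero hd0 (Nat.cast_ne_zero.mpr (Nat.factorial_ne_zero _))
  rw [finCumulant, finCumulant] at h
  have hsum := mul_left_cancel₀ hC h
  rw [← Finset.add_sum_erase _ _ (Finset.mem_univ (⊤ : SetPartition n)),
    ← Finset.add_sum_erase (f := fun π : SetPartition n =>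
      ((-1 : ℝ) ^ π.parts.card * (∏ V ∈ π.parts, (Nat.factorial V.card : ℝ)) *
          (∏ V ∈ π.parts, b V.card) * (Nat.factorial (π.parts.card - 1) : ℝ)) /
        (∏ V ∈ π.parts, (Nat.descFactorial d V.card : ℝ)))
      _ (Finset.mem_univ (⊤ : SetPartition n))] at hsum
  have herase : ∀ π ∈ (Finset.univ : Finset (SetPartition n)).erase ⊤,
      ((-1 : ℝ) ^ π.parts.card * (∏ V ∈ π.parts, (Nat.factorial V.card : ℝ)) *
          (∏ V ∈ π.parts, a V.card) * (Nat.factorial (π.parts.card - 1) : ℝ)) /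
        (∏ V ∈ π.parts, (Nat.descFactorial d V.card : ℝ))
      = ((-1 : ℝ) ^ π.parts.card * (∏ V ∈ π.parts, (Nat.factorial V.card : ℝ)) *
          (∏ V ∈ π.parts, b V.card) * (Nat.factorial (π.parts.card - 1) : ℝ)) /
        (∏ V ∈ π.parts, (Nat.descFactorial d V.card : ℝ)) := by
    intro π hπ
    have hne := (Finset.mem_erase.mp hπ).1
    have : (∏ V ∈ π.parts, a V.card) = ∏ V ∈ π.parts, b V.card := by
      refine Finset.prod_congr rfl fun V hV => ?_
      exact hab _ (π.nonempty_of_mem_parts hV).card_pos (card_lt_of_ne_top π hne hV)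
    rw [this]
  rw [Finset.sum_congr rfl herase] at hsum
  have htop := add_right_cancel hsum
  rw [parts_top_eq hn1] at htop
  simp only [Finset.prod_singleton, Finset.card_singleton, Finset.card_univ,
    Fintype.card_fin] at htop
  have hDn : (Nat.descFactorial d n : ℝ) ≠ 0 := by
    rw [Nat.cast_ne_zero]
    intro h0
    exact absurd (Nat.descFactorial_eq_zero_iff_lt.mp h0) (by omega)
  have hf : (Nat.factorial n : ℝ) ≠ 0 := Nat.cast_ne_zero.mpr (Nat.factorial_ne_zero _)
  field_simp at htop
  linarith

/-- **Poisson polynomials** (Example 6.2): if `p` is the monic polynomial of degree `d`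
whose `d`-finite free cumulants satisfy `κ_n(p) = λ` for all `n = 1, …, d`, then
`a^p_n = (d)_n (dλ)_n / (d^n n!)` for `1 ≤ n ≤ d`, where `(x)_n = x(x−1)⋯(x−n+1)`. -/
theorem poisson_coefficients (d : ℕ) (lam : ℝ) (p : Polynomial ℝ)
    (hmonic : p.Monic) (hdeg : p.natDegree = d)
    (hk : ∀ n : ℕ, 1 ≤ n → n ≤ d → finCumulant d (coeffA d p) n = lam)
    (n : ℕ) (hn1 : 1 ≤ n) (hnd : n ≤ d) :
    coeffA d p n =
      (Nat.descFactorial d n : ℝ) * (descPochhammer ℝ n).eval ((d : ℝ) * lam) /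
        ((d : ℝ) ^ n * (Nat.factorial n : ℝ)) := by
  have key : ∀ m : ℕ, 1 ≤ m → m ≤ d → coeffA d p m = bseq d lam m := by
    intro m
    induction m using Nat.strong_induction_on with
    | _ m ih =>
      intro h1 h2
      refine cumulant_determines d m h1 h2 _ _ (fun k hk1 hk2 => ih k hk2 hk1 (by omega)) ?_
      exact (hk m h1 h2).trans (finCumulant_bseq d lam m h1 h2).symm
  rw [key n hn1 hnd, bseq]
end
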